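/- arXiv:1406.7860 — 7 statements merged into one kernel-verified Lean document; each statement's English description precedes it below -/
import Mathlib

section
/- Let n ≥ 1 and let α and β be functions assigning a rational number to every 0-1 word of length n, related by α_F = Σ_{E ≤ F} β_E for all 0-1 words F of length n (the sum over all words E of length n with E ≤ F). Then α satisfies the Bayer–Billera relations if and only if β satisfies the dual Bayer–Billera relations. -/
/-- `chk E` is the word `E` with its last letter flipped (`chk [] = []`). -/
def chk : List Bool → List Bool
  | [] => []
  | [b] => [!b]
  | b :: c :: rest => b :: chk (c :: rest)

/-- `comp E` is the complementary word, with every letter flipped. -/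
def comp (E : List Bool) : List Bool := E.map (!·)

/-- `Eij i j` is the word `0^(i-1) 1 0^(j-i)`. -/
def Eij (i j : ℕ) : List Bool :=
  List.replicate (i - 1) false ++ [true] ++ List.replicate (j - i) false

/-- The word `0^j`. -/
def zeros (j : ℕ) : List Bool := List.replicate j false

/-- The word `1^j`. -/
def ones (j : ℕ) : List Bool := List.replicate j true

/-- `β` satisfies the dual Bayer–Billera relations (for words of length `n`). -/
def DualBB (n : ℕ) (β : List Bool → ℚ) : Prop :=
  ∀ E F : List Bool, E.length + F.length = n →
    β (E ++ F) + β (chk E ++ F) = β (E ++ comp F) + β (chk E ++ comp F)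

/-- `α` satisfies the Bayer–Billera relations (for words of length `n`). -/
def BB (n : ℕ) (α : List Bool → ℚ) : Prop :=
  ∀ (j : ℕ) (E F : List Bool), 1 ≤ j →
    (E = [] ∨ E.getLast? = some true) →
    (F = [] ∨ F.head? = some true) →
    E.length + j + F.length = n →
    ∑ i ∈ Finset.Icc 1 j, (-1 : ℚ) ^ (i - 1) * α (E ++ Eij i j ++ F) =
      2 * (if Odd j then 1 else 0) * α (E ++ zeros j ++ F)

/-- The finset of all 0-1 words of length `n`. -/
def allWords : ℕ → Finset (List Bool)
  | 0 => {[]}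
  | n + 1 => (allWords n).image (List.cons false) ∪ (allWords n).image (List.cons true)

/-- Pointwise order on words of equal length (`wleB E F = true` iff `E ≤ F`). -/
def wleB : List Bool → List Bool → Bool
  | [], [] => true
  | a :: E, b :: F => (!a || b) && wleB E F
  | _, _ => false

/-!
Both conditions say that the Walsh transform `β̂ T = ∑_w (-1)^|T ∧ w| β w` vanishes at every word
`T` outside `{0, 11}*`, i.e. having a maximal block of `1`s of odd length.

Such a `T` splits as `V Q` with `V` not ending in `1` and an odd number of `1`s in `Q`. On words
`E F` with `|E| = |V|`, the character of `T` is invariant under `E ↦ Ě` and changes sign under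
`F ↦ F̄`, so the dual relations give `β̂ T = -β̂ T`. Conversely, by Walsh inversion every dual
relation is a combination of such `β̂ T`.

Under `α = ζ β` the character of `T` becomes `zetaWalsh T`, which is multiplicative. Cutting
`T = P M S` like `E 0^j F`, the Bayer–Billera combination at `(E, j, F)` reduces on the middle block
to `-2 · altSum M`, and a nonzero term forces `P M S ∉ {0, 11}*`. Conversely, if `T = A 1^j R` with
`1^j` a maximal block of odd length, the relation at `(Ā, j, R̄)` involves `β̂ T` with a nonzero
coefficient and otherwise only words with fewer `1`s: induct on the number of `1`s.
-/

namespace BayerBillera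

open Finset

lemma sum_sum_sum_eq_single {α β γ M : Type*} [AddCommMonoid M] {s : Finset α} {t : Finset β}
    {r : Finset γ} {a : α} {b : β} {c : γ} (ha : a ∈ s) (hb : b ∈ t) (hc : c ∈ r)
    {f : α → β → γ → M} (h : ∀ x ∈ s, ∀ y ∈ t, ∀ z ∈ r, (x ≠ a ∨ y ≠ b ∨ z ≠ c) → f x y z = 0) :
    ∑ x ∈ s, ∑ y ∈ t, ∑ z ∈ r, f x y z = f a b c := by
  rw [sum_eq_single_of_mem a ha fun x hx hxa =>
      sum_eq_zero fun y hy => sum_eq_zero fun z hz => h x hx y hy z hz (Or.inl hxa),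
    sum_eq_single_of_mem b hb fun y hy hyb =>
      sum_eq_zero fun z hz => h a ha y hy z hz (Or.inr (Or.inl hyb)),
    sum_eq_single_of_mem c hc fun z hz hzc => h a ha b hb z hz (Or.inr (Or.inr hzc))]

lemma sum_Icc_one_eq_sum_range {M : Type*} [AddCommMonoid M] (j : ℕ) (f : ℕ → M) :
    ∑ i ∈ Icc 1 j, f i = ∑ i ∈ range j, f (i + 1) := by
  rw [range_eq_Ico, sum_Ico_add' f 0 j 1]
  rfl

lemma mem_allWords {n : ℕ} {w : List Bool} : w ∈ allWords n ↔ w.length = n := by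
  induction n generalizing w with
  | zero => simp [allWords, List.length_eq_zero_iff]
  | succ n ih =>
    match w with
    | [] => simp [allWords]
    | b :: w => cases b <;> simp [allWords, ih]

lemma sum_allWords_succ {M : Type*} [AddCommMonoid M] (n : ℕ) (f : List Bool → M) :
    ∑ w ∈ allWords (n + 1), f w =
      ∑ w ∈ allWords n, f (false :: w) + ∑ w ∈ allWords n, f (true :: w) := by
  rw [allWords, sum_union, sum_image, sum_image]
  · simp
  · simp
  · simp [disjoint_left]

lemma sum_allWords_append {M : Type*} [AddCommMonoid M] (k m : ℕ) (f : List Bool → M) :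
    ∑ w ∈ allWords (k + m), f w = ∑ u ∈ allWords k, ∑ v ∈ allWords m, f (u ++ v) := by
  induction k generalizing f with
  | zero => simp [allWords]
  | succ k ih =>
    rw [Nat.add_right_comm, sum_allWords_succ, sum_allWords_succ, ih, ih]
    rfl

lemma sum_allWords_involution {M : Type*} [AddCommMonoid M] {k : ℕ} (g : List Bool → List Bool)
    (hg : ∀ w, (g w).length = w.length) (hgg : Function.Involutive g) (f : List Bool → M) :
    ∑ w ∈ allWords k, f (g w) = ∑ w ∈ allWords k, f w :=
  sum_nbij' g g (by simp [mem_allWords, hg]) (by simp [mem_allWords, hg])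
    (fun w _ => hgg w) (fun w _ => hgg w) (fun _ _ => rfl)

lemma sum_allWords_eq_zero_of_involution {k : ℕ} (g : List Bool → List Bool)
    (hg : ∀ w, (g w).length = w.length) (hgg : Function.Involutive g) {f : List Bool → ℚ}
    (hf : ∀ w, w.length = k → f (g w) = -f w) : ∑ w ∈ allWords k, f w = 0 := by
  have h := sum_allWords_involution (k := k) g hg hgg f
  rw [sum_congr rfl fun w hw => hf w (mem_allWords.mp hw), sum_neg_distrib] at h
  linarith

lemma chk_cons_of_ne_nil (b : Bool) {w : List Bool} (hw : w ≠ []) : chk (b :: w) = b :: chk w := by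
  obtain ⟨c, w, rfl⟩ := List.exists_cons_of_ne_nil hw
  rfl

lemma chk_concat (w : List Bool) (b : Bool) : chk (w ++ [b]) = w ++ [!b] := by
  induction w with
  | nil => rfl
  | cons a w ih => rw [List.cons_append, chk_cons_of_ne_nil a (by simp), ih, List.cons_append]

lemma chk_length (w : List Bool) : (chk w).length = w.length := by
  rcases List.eq_nil_or_concat' w with rfl | ⟨w, b, rfl⟩
  · rfl
  · simp [chk_concat]

lemma chk_involutive : Function.Involutive chk := by
  intro w
  rcases List.eq_nil_or_concat' w with rfl | ⟨w, b, rfl⟩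
  · rfl
  · simp [chk_concat]

lemma comp_cons (b : Bool) (w : List Bool) : comp (b :: w) = (!b) :: comp w := rfl

lemma comp_length (w : List Bool) : (comp w).length = w.length := List.length_map _

lemma comp_involutive : Function.Involutive comp := by
  intro w
  simp [comp, Function.comp_def]

lemma getLast?_comp_ne_some_true_iff (w : List Bool) :
    (comp w).getLast? ≠ some true ↔ w = [] ∨ w.getLast? = some true := by
  rcases List.eq_nil_or_concat' w with rfl | ⟨w, b, rfl⟩ <;> simp [comp]

lemma head?_comp_ne_some_true_iff (w : List Bool) :
    (comp w).head? ≠ some true ↔ w = [] ∨ w.head? = some true := by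
  cases w <;> simp [comp]

lemma length_eq_of_wleB : ∀ {u v : List Bool}, wleB u v → u.length = v.length
  | [], [], _ => rfl
  | _ :: u, _ :: v, h => by
    simp only [wleB, Bool.and_eq_true] at h
    simp [length_eq_of_wleB h.2]

lemma wleB_append : ∀ {u u' : List Bool} (v v' : List Bool), u.length = u'.length →
    wleB (u ++ v) (u' ++ v') = (wleB u u' && wleB v v')
  | [], [], _, _, _ => by simp [wleB]
  | a :: u, b :: u', v, v', h => by
    simp [wleB, wleB_append v v' (by simpa using h), Bool.and_assoc]

lemma wleB_self : ∀ w : List Bool, wleB w w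
  | [] => rfl
  | b :: w => by cases b <;> simp [wleB, wleB_self w]

lemma wleB_ones : ∀ w : List Bool, wleB w (ones w.length)
  | [] => rfl
  | b :: w => by simpa [wleB, ones, List.replicate_succ] using wleB_ones w

lemma count_lt_of_wleB_of_ne : ∀ {u v : List Bool}, wleB u v → u ≠ v →
    u.count true < v.count true
  | [], [], _, hne => (hne rfl).elim
  | a :: u, b :: v, h, hne => by
    simp only [wleB, Bool.and_eq_true] at h
    obtain rfl | huv := eq_or_ne u v
    · cases a <;> cases b <;> simp_all
    · have := count_lt_of_wleB_of_ne h.2 huv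
      cases a <;> cases b <;> simp_all [this.le]

lemma count_le_of_wleB {u v : List Bool} (h : wleB u v) : u.count true ≤ v.count true :=
  (eq_or_ne u v).elim (fun huv => huv ▸ le_rfl) fun huv => (count_lt_of_wleB_of_ne h huv).le

lemma count_append_append_lt {P M S A B R : List Bool} (hP : wleB P A) (hM : wleB M B)
    (hS : wleB S R) (hne : P ≠ A ∨ M ≠ B ∨ S ≠ R) :
    (P ++ M ++ S).count true < (A ++ B ++ R).count true := by
  have := count_le_of_wleB hP
  have := count_le_of_wleB hM
  have := count_le_of_wleB hS
  simp only [List.count_append]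
  rcases hne with h | h | h
  · have := count_lt_of_wleB_of_ne hP h; omega
  · have := count_lt_of_wleB_of_ne hM h; omega
  · have := count_lt_of_wleB_of_ne hS h; omega

lemma getLast?_ne_of_wleB {u v : List Bool} (h : wleB u v) (hv : v.getLast? ≠ some true) :
    u.getLast? ≠ some true := by
  rcases List.eq_nil_or_concat' u with rfl | ⟨u, a, rfl⟩
  · simp
  rcases List.eq_nil_or_concat' v with rfl | ⟨v, b, rfl⟩
  · simpa using length_eq_of_wleB h
  have hlen : u.length = v.length := by simpa using length_eq_of_wleB h
  rw [wleB_append _ _ hlen] at h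
  cases a <;> cases b <;> simp_all [wleB]

lemma head?_ne_of_wleB {u v : List Bool} (h : wleB u v) (hv : v.head? ≠ some true) :
    u.head? ≠ some true := by
  match u, v with
  | [], _ => simp
  | a :: u, b :: v => cases a <;> cases b <;> simp_all [wleB]

lemma Eij_length {i j : ℕ} (hi : 1 ≤ i) (hij : i ≤ j) : (Eij i j).length = j := by
  simp [Eij]
  omega

lemma Eij_one_succ (j : ℕ) : Eij 1 (j + 1) = true :: zeros j := by
  simp [Eij, zeros]

lemma Eij_succ_succ {i : ℕ} (j : ℕ) (hi : 1 ≤ i) : Eij (i + 1) (j + 1) = false :: Eij i j := by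
  obtain ⟨i, rfl⟩ := Nat.exists_eq_add_of_le' hi
  simp [Eij, List.replicate_succ]

def altSum : List Bool → ℚ
  | [] => 0
  | b :: w => (if b then 1 else 0) - altSum w

lemma altSum_ones : ∀ j : ℕ, altSum (ones j) = if Odd j then 1 else 0
  | 0 => rfl
  | j + 1 => by
    rw [ones, List.replicate_succ, altSum, ← ones, altSum_ones j]
    by_cases hj : Odd j <;> simp [hj, Nat.odd_add_one]

lemma getLast?_ne_some_true_of_cons {a : Bool} {u : List Bool}
    (h : (a :: u).getLast? ≠ some true) : u.getLast? ≠ some true := by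
  cases hu : u.getLast? <;> simp_all [List.getLast?_cons]

lemma getLast?_false_cons_ne_some_true {u : List Bool} (h : u.getLast? ≠ some true) :
    (false :: u).getLast? ≠ some true := by
  cases hu : u.getLast? <;> simp_all [List.getLast?_cons]

/-- `{0, 11}*`: the words whose maximal blocks of `1`s all have even length. -/
inductive EvenRuns : List Bool → Prop
  | nil : EvenRuns []
  | cons_false {w : List Bool} : EvenRuns w → EvenRuns (false :: w)
  | cons_true_true {w : List Bool} : EvenRuns w → EvenRuns (true :: true :: w)

namespace EvenRuns

lemma even_count {w : List Bool} (h : EvenRuns w) : Even (w.count true) := by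
  induction h with
  | nil => exact ⟨0, rfl⟩
  | cons_false _ ih => simpa using ih
  | cons_true_true _ ih => simpa [List.count_cons, parity_simps] using ih

lemma of_append : ∀ {u v : List Bool}, EvenRuns (u ++ v) → u.getLast? ≠ some true →
    EvenRuns v
  | [], _, h, _ => h
  | false :: _, _, cons_false h, hu => of_append h (getLast?_ne_some_true_of_cons hu)
  | [true], _, _, hu => absurd rfl hu
  | true :: false :: _, _, h, _ => nomatch h
  | true :: true :: _, _, cons_true_true h, hu =>
    of_append h (getLast?_ne_some_true_of_cons (getLast?_ne_some_true_of_cons hu))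

lemma altSum_eq_zero : ∀ {u v : List Bool}, EvenRuns (u ++ v) → v.head? ≠ some true →
    altSum u = 0
  | [], _, _, _ => rfl
  | false :: _, _, cons_false h, hv => by simp [altSum, altSum_eq_zero h hv]
  | [true], _, cons_true_true _, hv => absurd rfl hv
  | true :: false :: _, _, h, _ => nomatch h
  | true :: true :: _, _, cons_true_true h, hv => by simp [altSum, altSum_eq_zero h hv]

end EvenRuns

lemma exists_odd_run_of_not_evenRuns : ∀ {w : List Bool}, ¬EvenRuns w →
    ∃ u j v, w = u ++ ones j ++ v ∧ Odd j ∧ u.getLast? ≠ some true ∧ v.head? ≠ some true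
  | [], h => (h .nil).elim
  | false :: _, h => by
    obtain ⟨u, j, v, rfl, hj, hu, hv⟩ :=
      exists_odd_run_of_not_evenRuns fun hw => h hw.cons_false
    exact ⟨false :: u, j, v, rfl, hj, getLast?_false_cons_ne_some_true hu, hv⟩
  | [true], _ => ⟨[], 1, [], rfl, odd_one, by simp, by simp⟩
  | true :: false :: w, _ => ⟨[], 1, false :: w, rfl, odd_one, by simp, by simp⟩
  | true :: true :: _, h => by
    obtain ⟨u, j, v, rfl, hj, hu, hv⟩ :=
      exists_odd_run_of_not_evenRuns fun hw => h hw.cons_true_true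
    rcases List.eq_nil_or_concat' u with rfl | ⟨u, a, rfl⟩
    · exact ⟨[], j + 2, v, rfl, hj.add_even even_two, by simp, hv⟩
    · refine ⟨true :: true :: (u ++ [a]), j, v, rfl, hj, ?_, hv⟩
      simpa [List.getLast?_cons] using hu

lemma exists_odd_suffix_of_not_evenRuns {w : List Bool} (h : ¬EvenRuns w) :
    ∃ u v, w = u ++ v ∧ u.getLast? ≠ some true ∧ Odd (v.count true) := by
  obtain ⟨u, j, v, rfl, hj, hu, hv⟩ := exists_odd_run_of_not_evenRuns h
  rcases Nat.even_or_odd (v.count true) with hev | hodd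
  · exact ⟨u, ones j ++ v, List.append_assoc .., hu, by simpa [ones] using hj.add_even hev⟩
  · obtain ⟨v, rfl⟩ : ∃ v', v = false :: v' := by
      match v, hv with
      | [], _ => simp at hodd
      | false :: v', _ => exact ⟨v', rfl⟩
    exact ⟨u ++ ones j ++ [false], v, by simp, by simp, by simpa using hodd⟩

lemma not_evenRuns_append {u v : List Bool} (hu : u.getLast? ≠ some true)
    (hv : Odd (v.count true)) : ¬EvenRuns (u ++ v) :=
  fun h => Nat.not_even_iff_odd.mpr hv (h.of_append hu).even_count

lemma not_evenRuns_append_append {u w v : List Bool} (hu : u.getLast? ≠ some true)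
    (hv : v.head? ≠ some true) (hw : altSum w ≠ 0) : ¬EvenRuns (u ++ w ++ v) := by
  rw [List.append_assoc]
  exact fun h => hw ((h.of_append hu).altSum_eq_zero hv)

def walsh (T w : List Bool) : ℚ := (-1) ^ (List.zipWith (· && ·) T w).count true

def walshTransform (n : ℕ) (β : List Bool → ℚ) (T : List Bool) : ℚ :=
  ∑ w ∈ allWords n, walsh T w * β w

lemma walsh_nil : walsh [] [] = 1 := rfl

lemma walsh_cons (t b : Bool) (T w : List Bool) :
    walsh (t :: T) (b :: w) = (if t && b then -1 else 1) * walsh T w := by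
  cases t <;> cases b <;> simp [walsh, pow_succ, mul_comm]

lemma walsh_append {T w : List Bool} (T' w' : List Bool) (h : T.length = w.length) :
    walsh (T ++ T') (w ++ w') = walsh T w * walsh T' w' := by
  simp [walsh, List.zipWith_append h, pow_add]

lemma walsh_chk {T w : List Bool} (h : T.length = w.length) :
    walsh T (chk w) = (if T.getLast? = some true then -1 else 1) * walsh T w := by
  rcases List.eq_nil_or_concat' w with rfl | ⟨w, b, rfl⟩
  · rw [List.length_eq_zero_iff.mp h]
    simp [chk]
  rcases List.eq_nil_or_concat' T with rfl | ⟨T, t, rfl⟩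
  · simp at h
  have h' : T.length = w.length := by simpa using h
  rw [chk_concat, walsh_append _ _ h', walsh_append _ _ h', walsh_cons, walsh_cons]
  cases t <;> cases b <;> simp

lemma walsh_comp : ∀ {T w : List Bool}, T.length = w.length →
    walsh T (comp w) = (-1) ^ T.count true * walsh T w
  | [], [], _ => by simp [comp, walsh_nil]
  | t :: T, b :: w, h => by
    have ih := walsh_comp (T := T) (w := w) (by simpa using h)
    rw [comp_cons, walsh_cons, ih, walsh_cons]
    cases t <;> cases b <;> simp [pow_succ]

lemma sum_walsh_mul_walsh : ∀ {n : ℕ} {w w' : List Bool}, w.length = n → w'.length = n →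
    ∑ T ∈ allWords n, walsh T w * walsh T w' = if w = w' then 2 ^ n else 0
  | 0, [], [], _, _ => by simp [allWords, walsh_nil]
  | n + 1, b :: w, b' :: w', hw, hw' => by
    have ih := sum_walsh_mul_walsh (n := n) (w := w) (w' := w')
      (by simpa using hw) (by simpa using hw')
    simp only [sum_allWords_succ, walsh_cons]
    cases b <;> cases b' <;> simp [ih, pow_succ] <;> split_ifs <;> ring

lemma sum_walsh_mul_walshTransform {n : ℕ} (β : List Bool → ℚ) {w : List Bool}
    (hw : w.length = n) :
    ∑ T ∈ allWords n, walsh T w * walshTransform n β T = 2 ^ n * β w := by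
  calc ∑ T ∈ allWords n, walsh T w * walshTransform n β T
      = ∑ w' ∈ allWords n, (∑ T ∈ allWords n, walsh T w * walsh T w') * β w' := by
        simp only [walshTransform, mul_sum, sum_mul, mul_assoc]
        exact sum_comm
    _ = ∑ w' ∈ allWords n, (if w = w' then 2 ^ n else 0) * β w' :=
        sum_congr rfl fun w' hw' => by rw [sum_walsh_mul_walsh hw (mem_allWords.mp hw')]
    _ = 2 ^ n * β w := by simp [mem_allWords.mpr hw]

lemma walshTransform_append {n : ℕ} (β : List Bool → ℚ) {V Q : List Bool}
    (h : V.length + Q.length = n) :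
    walshTransform n β (V ++ Q) =
      ∑ u ∈ allWords V.length, ∑ v ∈ allWords Q.length, walsh V u * walsh Q v * β (u ++ v) := by
  rw [walshTransform, ← h, sum_allWords_append]
  refine sum_congr rfl fun u hu => sum_congr rfl fun v _ => ?_
  rw [walsh_append _ _ (mem_allWords.mp hu).symm]

lemma walshTransform_eq_zero_of_dualBB {n : ℕ} {β : List Bool → ℚ} (hβ : DualBB n β)
    {T : List Bool} (hT : T.length = n) (hbad : ¬EvenRuns T) : walshTransform n β T = 0 := by
  obtain ⟨V, Q, rfl, hV, hQ⟩ := exists_odd_suffix_of_not_evenRuns hbad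
  rw [List.length_append] at hT
  have hchk : ∑ u ∈ allWords V.length, ∑ v ∈ allWords Q.length,
      walsh V u * walsh Q v * β (chk u ++ v) = walshTransform n β (V ++ Q) := by
    rw [walshTransform_append β hT, ← sum_allWords_involution chk chk_length chk_involutive]
    refine sum_congr rfl fun u hu => sum_congr rfl fun v _ => ?_
    rw [chk_involutive, walsh_chk (mem_allWords.mp hu).symm, if_neg hV, one_mul]
  have hcomp : ∀ u, u.length = V.length → ∑ v ∈ allWords Q.length,
      walsh Q v * (β (u ++ v) + β (chk u ++ v)) = 0 := fun u hu =>
    sum_allWords_eq_zero_of_involution comp comp_length comp_involutive fun v hv => by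
      rw [walsh_comp hv.symm, Odd.neg_one_pow hQ, ← hβ u v (by rw [hu, hv, hT])]
      ring
  have htwice : 2 * walshTransform n β (V ++ Q) = ∑ u ∈ allWords V.length,
      walsh V u * ∑ v ∈ allWords Q.length, walsh Q v * (β (u ++ v) + β (chk u ++ v)) := by
    rw [two_mul]
    nth_rw 2 [← hchk]
    rw [walshTransform_append β hT, ← sum_add_distrib]
    refine sum_congr rfl fun u _ => ?_
    rw [mul_sum, ← sum_add_distrib]
    exact sum_congr rfl fun v _ => by ring
  rw [sum_eq_zero fun u hu => by rw [hcomp u (mem_allWords.mp hu), mul_zero]] at htwice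
  simpa using htwice

lemma walsh_dualBB_combination {P Q E F : List Bool} (hP : P.length = E.length)
    (hQ : Q.length = F.length) :
    walsh (P ++ Q) (E ++ F) + walsh (P ++ Q) (chk E ++ F) - walsh (P ++ Q) (E ++ comp F) -
        walsh (P ++ Q) (chk E ++ comp F) =
      (if P.getLast? = some true then 0 else 2) * (1 - (-1) ^ Q.count true) *
        (walsh P E * walsh Q F) := by
  have hP' : P.length = (chk E).length := by rw [chk_length, hP]
  rw [walsh_append _ _ hP, walsh_append _ _ hP', walsh_append _ _ hP, walsh_append _ _ hP',
    walsh_chk hP, walsh_comp hQ]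
  split_ifs <;> ring

lemma dualBB_of_walshTransform_eq_zero {n : ℕ} {β : List Bool → ℚ}
    (hβ : ∀ T, T.length = n → ¬EvenRuns T → walshTransform n β T = 0) : DualBB n β := by
  intro E F hEF
  subst hEF
  have hlen : ∀ {u v : List Bool}, u.length = E.length → v.length = F.length →
      (u ++ v).length = E.length + F.length := fun hu hv => by rw [List.length_append, hu, hv]
  have key : ∑ T ∈ allWords (E.length + F.length),
      (walsh T (E ++ F) + walsh T (chk E ++ F) - walsh T (E ++ comp F) -
        walsh T (chk E ++ comp F)) * walshTransform (E.length + F.length) β T = 0 := by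
    rw [sum_allWords_append]
    refine sum_eq_zero fun P hP => sum_eq_zero fun Q hQ => ?_
    rw [walsh_dualBB_combination (mem_allWords.mp hP) (mem_allWords.mp hQ)]
    by_cases hPl : P.getLast? = some true
    · simp [hPl]
    rcases Nat.even_or_odd (Q.count true) with hev | hodd
    · simp [hev.neg_one_pow]
    · rw [hβ _ (hlen (mem_allWords.mp hP) (mem_allWords.mp hQ)) (not_evenRuns_append hPl hodd),
        mul_zero]
  simp only [add_mul, sub_mul, sum_add_distrib, sum_sub_distrib,
    sum_walsh_mul_walshTransform β (hlen rfl rfl),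
    sum_walsh_mul_walshTransform β (hlen (chk_length E) rfl),
    sum_walsh_mul_walshTransform β (hlen rfl (comp_length F)),
    sum_walsh_mul_walshTransform β (hlen (chk_length E) (comp_length F))] at key
  have h2 : (2 : ℚ) ^ (E.length + F.length) ≠ 0 := by positivity
  exact sub_eq_zero.mp (by simpa [h2, ← mul_add, ← mul_sub, sub_sub] using key)

/-- `∑_{e ≤ w} walsh T e` in closed form (`sum_walsh_of_wleB`). -/
def zetaWalsh : List Bool → List Bool → ℚ
  | t :: T, b :: w => (if b then (if t then 0 else 2) else 1) * zetaWalsh T w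
  | _, _ => 1

lemma zetaWalsh_append : ∀ {T w : List Bool} (T' w' : List Bool), T.length = w.length →
    zetaWalsh (T ++ T') (w ++ w') = zetaWalsh T w * zetaWalsh T' w'
  | [], [], _, _, _ => by simp [zetaWalsh]
  | t :: T, b :: w, T', w', h => by
    simp [zetaWalsh, zetaWalsh_append T' w' (by simpa using h), mul_assoc]

lemma zetaWalsh_zeros : ∀ (T : List Bool) (j : ℕ), zetaWalsh T (zeros j) = 1
  | [], _ => by simp [zetaWalsh]
  | _ :: _, 0 => rfl
  | _ :: T, j + 1 => by simpa [zetaWalsh, zeros, List.replicate_succ] using zetaWalsh_zeros T j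

lemma zetaWalsh_ne_zero_iff : ∀ {T w : List Bool}, T.length = w.length →
    (zetaWalsh T w ≠ 0 ↔ wleB T (comp w))
  | [], [], _ => by simp [zetaWalsh, comp, wleB]
  | t :: T, b :: w, h => by
    have ih := zetaWalsh_ne_zero_iff (T := T) (w := w) (by simpa using h)
    cases t <;> cases b <;> simp [zetaWalsh, comp_cons, wleB, ih]

lemma zetaWalsh_comp_self_ne_zero (w : List Bool) : zetaWalsh w (comp w) ≠ 0 :=
  (zetaWalsh_ne_zero_iff (comp_length w).symm).mpr (by rw [comp_involutive]; exact wleB_self w)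

lemma sum_walsh_of_wleB : ∀ {n : ℕ} {T w : List Bool}, T.length = n → w.length = n →
    ∑ e ∈ (allWords n).filter (wleB · w), walsh T e = zetaWalsh T w
  | 0, [], [], _, _ => by simp [allWords, filter_singleton, wleB, walsh_nil, zetaWalsh]
  | n + 1, t :: T, b :: w, hT, hw => by
    have ih := sum_walsh_of_wleB (T := T) (w := w) (by simpa using hT) (by simpa using hw)
    rw [sum_filter] at ih ⊢
    simp only [sum_allWords_succ, wleB, walsh_cons, zetaWalsh, ← mul_ite_zero, ← mul_sum]
    cases t <;> cases b <;> simp [ih, two_mul]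

lemma two_pow_mul_eq_sum_zetaWalsh {n : ℕ} {α β : List Bool → ℚ}
    (hαβ : ∀ F : List Bool, F.length = n →
      α F = ∑ E ∈ (allWords n).filter (fun E => wleB E F), β E)
    {w : List Bool} (hw : w.length = n) :
    2 ^ n * α w = ∑ T ∈ allWords n, zetaWalsh T w * walshTransform n β T := by
  calc 2 ^ n * α w
      = ∑ e ∈ (allWords n).filter (wleB · w),
          ∑ T ∈ allWords n, walsh T e * walshTransform n β T := by
        rw [hαβ w hw, mul_sum]
        refine sum_congr rfl fun e he => ?_
        rw [sum_walsh_mul_walshTransform β (mem_allWords.mp (mem_filter.mp he).1)]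
    _ = ∑ T ∈ allWords n, zetaWalsh T w * walshTransform n β T := by
        rw [sum_comm]
        refine sum_congr rfl fun T hT => ?_
        rw [← sum_mul, sum_walsh_of_wleB (mem_allWords.mp hT) hw]

lemma sum_range_zetaWalsh_Eij : ∀ M : List Bool,
    ∑ i ∈ range M.length, (-1) ^ i * zetaWalsh M (Eij (i + 1) M.length) =
      2 * (if Odd M.length then 1 else 0) - 2 * altSum M
  | [] => by simp [altSum]
  | b :: M => by
    rw [List.length_cons, sum_range_succ', Eij_one_succ]
    simp only [Eij_succ_succ _ (Nat.le_add_left 1 _), zetaWalsh, zetaWalsh_zeros]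
    by_cases h : Odd M.length <;> cases b <;>
      simp [h, pow_succ, sum_neg_distrib, sum_range_zetaWalsh_Eij M, altSum, Nat.odd_add_one] <;>
      ring

def bbDefect (f : List Bool → ℚ) (E : List Bool) (j : ℕ) (F : List Bool) : ℚ :=
  ∑ i ∈ Icc 1 j, (-1) ^ (i - 1) * f (E ++ Eij i j ++ F) -
    2 * (if Odd j then 1 else 0) * f (E ++ zeros j ++ F)

lemma bb_iff_bbDefect_eq_zero {n : ℕ} {α : List Bool → ℚ} :
    BB n α ↔ ∀ (j : ℕ) (E F : List Bool), 1 ≤ j → (E = [] ∨ E.getLast? = some true) →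
      (F = [] ∨ F.head? = some true) → E.length + j + F.length = n → bbDefect α E j F = 0 := by
  simp only [BB, bbDefect, sub_eq_zero]

lemma bbDefect_congr {n j : ℕ} {E F : List Bool} (hlen : E.length + j + F.length = n)
    {f g : List Bool → ℚ} (h : ∀ G, G.length = n → f G = g G) :
    bbDefect f E j F = bbDefect g E j F := by
  have hz : (E ++ zeros j ++ F).length = n := by simp [zeros]; omega
  rw [bbDefect, bbDefect, h _ hz]
  congr 1
  refine sum_congr rfl fun i hi => ?_
  obtain ⟨hi1, hij⟩ := mem_Icc.mp hi
  rw [h _ (by simp [Eij_length hi1 hij]; omega)]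

lemma mul_bbDefect (c : ℚ) (f : List Bool → ℚ) (E : List Bool) (j : ℕ) (F : List Bool) :
    c * bbDefect f E j F = bbDefect (fun G => c * f G) E j F := by
  simp only [bbDefect, mul_sub, mul_sum]
  congr 1
  · exact sum_congr rfl fun _ _ => by ring
  · ring

lemma bbDefect_sum {ι : Type*} (s : Finset ι) (g : ι → List Bool → ℚ) (c : ι → ℚ)
    (E : List Bool) (j : ℕ) (F : List Bool) :
    bbDefect (fun G => ∑ T ∈ s, g T G * c T) E j F = ∑ T ∈ s, bbDefect (g T) E j F * c T := by
  simp only [bbDefect, sub_mul, sum_sub_distrib, sum_mul, mul_sum, mul_assoc]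
  rw [sum_comm]

lemma bbDefect_zetaWalsh {P M S E F : List Bool} (hP : P.length = E.length) :
    bbDefect (zetaWalsh (P ++ M ++ S)) E M.length F =
      -2 * altSum M * zetaWalsh P E * zetaWalsh S F := by
  have hsplit : ∀ X : List Bool, X.length = M.length →
      zetaWalsh (P ++ M ++ S) (E ++ X ++ F) = zetaWalsh P E * zetaWalsh S F * zetaWalsh M X :=
    fun X hX => by
      rw [zetaWalsh_append _ _ (by simp [hP, hX]), zetaWalsh_append _ _ hP]
      ring
  rw [bbDefect, hsplit _ (by simp [zeros]), zetaWalsh_zeros, sum_Icc_one_eq_sum_range]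
  rw [sum_congr rfl fun i hi => by
    rw [hsplit _ (Eij_length (Nat.le_add_left 1 i) (mem_range.mp hi)), Nat.add_sub_cancel,
      mul_left_comm]]
  rw [← mul_sum, sum_range_zetaWalsh_Eij]
  ring

lemma two_pow_mul_bbDefect {n j : ℕ} {α β : List Bool → ℚ}
    (hαβ : ∀ F : List Bool, F.length = n →
      α F = ∑ E ∈ (allWords n).filter (fun E => wleB E F), β E)
    {E F : List Bool} (hlen : E.length + j + F.length = n) :
    2 ^ n * bbDefect α E j F =
      -2 * ∑ P ∈ allWords E.length, ∑ M ∈ allWords j, ∑ S ∈ allWords F.length,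
        altSum M * zetaWalsh P E * zetaWalsh S F * walshTransform n β (P ++ M ++ S) := by
  calc 2 ^ n * bbDefect α E j F
      = bbDefect (fun G => ∑ T ∈ allWords n, zetaWalsh T G * walshTransform n β T) E j F := by
        rw [mul_bbDefect]
        exact bbDefect_congr hlen fun G hG => two_pow_mul_eq_sum_zetaWalsh hαβ hG
    _ = ∑ T ∈ allWords n, bbDefect (zetaWalsh T) E j F * walshTransform n β T :=
        bbDefect_sum ..
    _ = _ := by
        rw [← hlen, sum_allWords_append, sum_allWords_append, mul_sum]
        refine sum_congr rfl fun P hP => ?_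
        rw [mul_sum]
        refine sum_congr rfl fun M hM => ?_
        rw [mul_sum]
        refine sum_congr rfl fun S _ => ?_
        rw [← mem_allWords.mp hM, bbDefect_zetaWalsh (mem_allWords.mp hP), mem_allWords.mp hM]
        ring

lemma altSum_mul_zetaWalsh_eq_zero {P M S E F : List Bool} (hP : P.length = E.length)
    (hS : S.length = F.length) (hE : E = [] ∨ E.getLast? = some true)
    (hF : F = [] ∨ F.head? = some true) {x : ℚ}
    (hx : ¬EvenRuns (P ++ M ++ S) → wleB P (comp E) → wleB S (comp F) → x = 0) :
    altSum M * zetaWalsh P E * zetaWalsh S F * x = 0 := by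
  by_contra h
  simp only [mul_eq_zero, not_or] at h
  obtain ⟨⟨⟨hM, hPE⟩, hSF⟩, hx0⟩ := h
  replace hPE := (zetaWalsh_ne_zero_iff hP).mp hPE
  replace hSF := (zetaWalsh_ne_zero_iff hS).mp hSF
  refine hx0 (hx (not_evenRuns_append_append ?_ ?_ hM) hPE hSF)
  · exact getLast?_ne_of_wleB hPE ((getLast?_comp_ne_some_true_iff E).mpr hE)
  · exact head?_ne_of_wleB hSF ((head?_comp_ne_some_true_iff F).mpr hF)

lemma bb_of_walshTransform_eq_zero {n : ℕ} {α β : List Bool → ℚ}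
    (hαβ : ∀ F : List Bool, F.length = n →
      α F = ∑ E ∈ (allWords n).filter (fun E => wleB E F), β E)
    (hβ : ∀ T, T.length = n → ¬EvenRuns T → walshTransform n β T = 0) : BB n α := by
  refine bb_iff_bbDefect_eq_zero.mpr fun j E F _ hE hF hlen => ?_
  refine (mul_eq_zero.mp ?_).resolve_left (pow_ne_zero n two_ne_zero)
  rw [two_pow_mul_bbDefect hαβ hlen]
  refine mul_eq_zero_of_right _
    (sum_eq_zero fun P hP => sum_eq_zero fun M hM => sum_eq_zero fun S hS => ?_)
  rw [mem_allWords] at hP hM hS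
  exact altSum_mul_zetaWalsh_eq_zero hP hS hE hF fun hbad _ _ => hβ _ (by simp [hP, hM, hS]; omega) hbad

lemma walshTransform_eq_zero_of_bb {n : ℕ} {α β : List Bool → ℚ}
    (hαβ : ∀ F : List Bool, F.length = n →
      α F = ∑ E ∈ (allWords n).filter (fun E => wleB E F), β E)
    (hα : BB n α) {T : List Bool} (hT : T.length = n) (hbad : ¬EvenRuns T) :
    walshTransform n β T = 0 := by
  induction hc : T.count true using Nat.strong_induction_on generalizing T with
  | _ c ih =>
  obtain ⟨A, j, R, rfl, hj, hA, hR⟩ := exists_odd_run_of_not_evenRuns hbad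
  have hlen : (comp A).length + j + (comp R).length = n := by
    simp [comp_length, ones] at hT ⊢
    omega
  have hE := (getLast?_comp_ne_some_true_iff (comp A)).mp (by rwa [comp_involutive])
  have hF := (head?_comp_ne_some_true_iff (comp R)).mp (by rwa [comp_involutive])
  -- `T` is the only term of the relation at `(Ā, j, R̄)` not covered by the induction
  have hothers : ∀ P ∈ allWords A.length, ∀ M ∈ allWords j, ∀ S ∈ allWords R.length,
      (P ≠ A ∨ M ≠ ones j ∨ S ≠ R) → altSum M * zetaWalsh P (comp A) * zetaWalsh S (comp R) *
        walshTransform n β (P ++ M ++ S) = 0 := by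
    intro P hP M hM S hS hne
    rw [mem_allWords] at hP hM hS
    refine altSum_mul_zetaWalsh_eq_zero (by rw [hP, comp_length]) (by rw [hS, comp_length]) hE hF
      fun hbad' hPA hSR => ?_
    rw [comp_involutive] at hPA hSR
    refine ih _ ?_ (by simp [hP, hM, hS, ← hT, ones]) hbad' rfl
    exact hc ▸ count_append_append_lt hPA (hM ▸ wleB_ones M) hSR hne
  have hdef := two_pow_mul_bbDefect hαβ hlen
  rw [bb_iff_bbDefect_eq_zero.mp hα j _ _ hj.pos hE hF hlen, mul_zero, comp_length, comp_length,
    sum_sum_sum_eq_single (mem_allWords.mpr rfl)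
      (show ones j ∈ allWords j from mem_allWords.mpr (by simp [ones])) (mem_allWords.mpr rfl)
      hothers, altSum_ones, if_pos hj] at hdef
  simpa [zetaWalsh_comp_self_ne_zero] using hdef.symm

end BayerBillera

theorem bayer_billera_iff_dual_bayer_billera_general (n : ℕ)
    (α β : List Bool → ℚ)
    (hαβ : ∀ F : List Bool, F.length = n →
      α F = ∑ E ∈ (allWords n).filter (fun E => wleB E F), β E) :
    BB n α ↔ DualBB n β := by
  constructor
  · intro hα
    exact BayerBillera.dualBB_of_walshTransform_eq_zero fun _ hT hbad =>
      BayerBillera.walshTransform_eq_zero_of_bb hαβ hα hT hbad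
  · intro hβ
    exact BayerBillera.bb_of_walshTransform_eq_zero hαβ fun _ hT hbad =>
      BayerBillera.walshTransform_eq_zero_of_dualBB hβ hT hbad

theorem bayer_billera_iff_dual_bayer_billera (n : ℕ) (hn : 1 ≤ n)
    (α β : List Bool → ℚ)
    (hαβ : ∀ F : List Bool, F.length = n →
      α F = ∑ E ∈ (allWords n).filter (fun E => wleB E F), β E) :
    BB n α ↔ DualBB n β :=
  bayer_billera_iff_dual_bayer_billera_general n α β hαβ
end

section
/- Let n ≥ 1 and let β be a function assigning a rational number to every 0-1 word of length n that satisfies the dual Bayer–Billera relations. Then for all 0-1 words E, F and all j ≥ 1 such that E1^jF has length n, β_{E1^jF} = Σ_{i=1}^{j−1} (−1)^{i−1} β_{E E_{i,j} F̄} + (−1)^{j−1} β_{E E_{j,j} F} + χ_even(j) β_{E 0^j F̄}, where 1^j (resp. 0^j) is the word of j ones (resp. zeros), and χ_even(j) = 1 if j is even and 0 otherwise. -/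
lemma chk_append_singleton (E : List Bool) (b : Bool) : chk (E ++ [b]) = E ++ [!b] := by
  induction E with
  | nil => rfl
  | cons a E ih =>
    cases E with
    | nil => rfl
    | cons c E => exact congrArg (a :: ·) ih

lemma Eij_one_succ (j : ℕ) : Eij 1 (j + 1) = true :: zeros j := by
  simp [Eij, zeros]

lemma Eij_succ_succ {i : ℕ} (j : ℕ) (hi : 1 ≤ i) : Eij (i + 1) (j + 1) = false :: Eij i j := by
  obtain ⟨i, rfl⟩ := Nat.exists_eq_add_of_le' hi
  simp [Eij, List.replicate_succ]

lemma sum_Icc_one_eq_sum_range {M : Type*} [AddCommMonoid M] (f : ℕ → M) (m : ℕ) :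
    ∑ i ∈ Finset.Icc 1 m, f i = ∑ k ∈ Finset.range m, f (k + 1) := by
  rw [← Finset.Ico_add_one_right_eq_Icc, Finset.sum_Ico_eq_sum_range]
  simp [add_comm]

namespace DualBB

variable {n : ℕ} {β : List Bool → ℚ}

lemma ones_succ (hβ : DualBB n β) {E F : List Bool} {j : ℕ}
    (hlen : E.length + (j + 1) + F.length = n) :
    β (E ++ ones (j + 1) ++ F) =
      β (E ++ Eij 1 (j + 1) ++ comp F) + β (E ++ zeros (j + 1) ++ comp F) -
        β (E ++ [false] ++ ones j ++ F) := by
  have h := hβ (E ++ [true]) (ones j ++ F) (by simp [ones]; omega)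
  simp [chk_append_singleton, ones, zeros, comp, Eij_one_succ, List.replicate_succ] at h ⊢
  linarith

lemma expand_ones_succ (hβ : DualBB n β) {E F : List Bool} {m : ℕ}
    (hlen : E.length + (m + 1) + F.length = n) :
    β (E ++ ones (m + 1) ++ F) =
      (∑ k ∈ Finset.range m, (-1 : ℚ) ^ k * β (E ++ Eij (k + 1) (m + 1) ++ comp F)) +
        (-1 : ℚ) ^ m * β (E ++ Eij (m + 1) (m + 1) ++ F) +
        (if Even (m + 1) then 1 else 0) * β (E ++ zeros (m + 1) ++ comp F) := by
  induction m generalizing E with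
  | zero => simp [ones, Eij]
  | succ m ih =>
    have hEij : ∀ k G,
        E ++ [false] ++ Eij (k + 1) (m + 1) ++ G = E ++ Eij (k + 1 + 1) (m + 1 + 1) ++ G :=
      fun k G => by simp [Eij_succ_succ (m + 1) (Nat.le_add_left 1 k)]
    have hzeros : E ++ [false] ++ zeros (m + 1) = E ++ zeros (m + 1 + 1) := by
      simp [zeros, List.replicate_succ]
    have hE0 := ih (E := E ++ [false]) (by simp; omega)
    simp only [hEij, hzeros] at hE0
    rw [hβ.ones_succ hlen, hE0, Finset.sum_range_succ']
    simp only [pow_succ, Nat.even_add_one, mul_neg, mul_one, neg_mul, Finset.sum_neg_distrib,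
      pow_zero, one_mul]
    split_ifs <;> ring

end DualBB

theorem dualBB_solving_ones_general (n : ℕ) (β : List Bool → ℚ)
    (hβ : DualBB n β) (E F : List Bool) (j : ℕ) (hj : 1 ≤ j)
    (hlen : E.length + j + F.length = n) :
    β (E ++ ones j ++ F) =
      (∑ i ∈ Finset.Icc 1 (j - 1), (-1 : ℚ) ^ (i - 1) * β (E ++ Eij i j ++ comp F)) +
        (-1 : ℚ) ^ (j - 1) * β (E ++ Eij j j ++ F) +
        (if Even j then 1 else 0) * β (E ++ zeros j ++ comp F) := by
  obtain ⟨m, rfl⟩ := Nat.exists_eq_add_of_le' hj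
  rw [hβ.expand_ones_succ hlen, sum_Icc_one_eq_sum_range]
  simp

theorem dualBB_solving_ones (n : ℕ) (hn : 1 ≤ n) (β : List Bool → ℚ)
    (hβ : DualBB n β) (E F : List Bool) (j : ℕ) (hj : 1 ≤ j)
    (hlen : E.length + j + F.length = n) :
    β (E ++ ones j ++ F) =
      (∑ i ∈ Finset.Icc 1 (j - 1), (-1 : ℚ) ^ (i - 1) * β (E ++ Eij i j ++ comp F)) +
        (-1 : ℚ) ^ (j - 1) * β (E ++ Eij j j ++ F) +
        (if Even j then 1 else 0) * β (E ++ zeros j ++ comp F) :=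
  dualBB_solving_ones_general n β hβ E F j hj hlen
end

section
/- For every n ≥ 1, the set of functions β from 0-1 words of length n to ℚ satisfying the dual Bayer–Billera relations is a ℚ-vector subspace of the space of all such functions, of dimension at least f_{n+1}, where f_m is the m-th Fibonacci number (f_0 = 0, f_1 = 1, f_m = f_{m−1} + f_{m−2}). -/
/-!
Let `W n` be the space of dual Bayer–Billera functions supported on words of length `n`.
Complementation invariance (the relation with `E = ε`) shows that `(β, γ) ↦ β ∘ tail + γ'`,
where `γ' (abG) = [a = b] γ G`, maps `W (n + 1) × W n` into `W (n + 2)`; it is injective,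
since `β` can be read off on the words `(¬b) b G`. Hence
`dim W (n + 2) ≥ dim W (n + 1) + dim W n`, and since every `W n` contains the indicator of the
words of length `n`, `dim W n ≥ f (n + 1)`.
-/

theorem length_chk (E : List Bool) : (chk E).length = E.length := by
  induction E using chk.induct <;> simp_all [chk]

theorem comp_cons (b : Bool) (E : List Bool) : comp (b :: E) = (!b) :: comp E :=
  rfl

def dualBBSubmodule (n : ℕ) : Submodule ℚ (List Bool → ℚ) where
  carrier := {β | DualBB n β ∧ ∀ E : List Bool, E.length ≠ n → β E = 0}
  add_mem' := by
    rintro β γ ⟨hβ, hβ₀⟩ ⟨hγ, hγ₀⟩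
    refine ⟨fun E F h => ?_, fun E h => ?_⟩
    · simp only [Pi.add_apply]
      linear_combination hβ E F h + hγ E F h
    · simp [hβ₀ E h, hγ₀ E h]
  zero_mem' := ⟨fun _ _ _ => by simp, fun _ _ => rfl⟩
  smul_mem' := by
    rintro c β ⟨hβ, hβ₀⟩
    refine ⟨fun E F h => ?_, fun E h => ?_⟩
    · simp only [Pi.smul_apply, smul_eq_mul]
      linear_combination c * hβ E F h
    · simp [hβ₀ E h]

theorem DualBB.apply_comp {n : ℕ} {β : List Bool → ℚ} (h : DualBB n β) {F : List Bool}
    (hF : F.length = n) : β (comp F) = β F := by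
  have := h [] F (by simpa using hF)
  simp only [chk, List.nil_append] at this
  linarith

theorem DualBB.comp_tail {n : ℕ} {β : List Bool → ℚ} (h : DualBB n β) :
    DualBB (n + 1) (β ∘ List.tail) := by
  intro E F hlen
  simp only [Function.comp_apply]
  rcases E with _ | ⟨b, _ | ⟨c, E⟩⟩
  · rcases F with _ | ⟨a, G⟩
    · simp at hlen
    · have := h.apply_comp (F := G) (by simpa using hlen)
      simp only [chk, List.nil_append, comp_cons, List.tail_cons, this]
  · have := h.apply_comp (F := F) (by simp at hlen; omega)
    simp only [chk, List.cons_append, List.nil_append, List.tail_cons, this]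
  · simpa [chk] using h (c :: E) F (by simp at hlen ⊢; omega)

def pairLift (γ : List Bool → ℚ) : List Bool → ℚ
  | a :: b :: E => if a = b then γ E else 0
  | _ => 0

section pairLift

variable (γ : List Bool → ℚ) (a b : Bool) (E : List Bool)

@[simp]
theorem pairLift_cons_cons : pairLift γ (a :: b :: E) = if a = b then γ E else 0 :=
  rfl

theorem pairLift_not_cons_not : pairLift γ ((!a) :: (!b) :: E) = pairLift γ (a :: b :: E) := by
  simp

theorem pairLift_add_pairLift_not_cons :
    pairLift γ (a :: b :: E) + pairLift γ ((!a) :: b :: E) = γ E := by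
  cases a <;> cases b <;> simp

theorem pairLift_add_pairLift_cons_not :
    pairLift γ (a :: b :: E) + pairLift γ (a :: (!b) :: E) = γ E := by
  cases a <;> cases b <;> simp

end pairLift

theorem DualBB.pairLift {n : ℕ} {γ : List Bool → ℚ} (h : DualBB n γ) :
    DualBB (n + 2) (_root_.pairLift γ) := by
  intro E F hlen
  rcases E with _ | ⟨b, _ | ⟨c, _ | ⟨d, E⟩⟩⟩
  · rcases F with _ | ⟨a, _ | ⟨a', G⟩⟩
    · simp at hlen
    · simp at hlen
    · have := h.apply_comp (F := G) (by simpa using hlen)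
      simp only [chk, List.nil_append, comp_cons]
      rw [pairLift_not_cons_not]
      simp only [pairLift_cons_cons, this]
  · rcases F with _ | ⟨a, G⟩
    · simp at hlen
    · have := h.apply_comp (F := G) (by simp at hlen; omega)
      simp only [chk, List.cons_append, List.nil_append, comp_cons,
        pairLift_add_pairLift_not_cons, this]
  · have := h.apply_comp (F := F) (by simp at hlen; omega)
    simp only [chk, List.cons_append, List.nil_append, pairLift_add_pairLift_cons_not, this]
  · have := h (d :: E) F (by simp at hlen ⊢; omega)
    simp only [chk, List.cons_append, pairLift_cons_cons] at this ⊢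
    split_ifs
    · exact this
    · rfl

theorem comp_tail_mem_dualBBSubmodule {n : ℕ} {β : List Bool → ℚ}
    (hβ : β ∈ dualBBSubmodule (n + 1)) : β ∘ List.tail ∈ dualBBSubmodule (n + 2) := by
  refine ⟨hβ.1.comp_tail, fun E hE => hβ.2 E.tail ?_⟩
  simp only [List.length_tail]
  omega

theorem pairLift_mem_dualBBSubmodule {n : ℕ} {γ : List Bool → ℚ}
    (hγ : γ ∈ dualBBSubmodule n) : pairLift γ ∈ dualBBSubmodule (n + 2) := by
  refine ⟨hγ.1.pairLift, fun E hE => ?_⟩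
  rcases E with _ | ⟨a, _ | ⟨b, E⟩⟩
  · rfl
  · rfl
  · simp [pairLift, hγ.2 E (by simpa using hE)]

def liftPair : (List Bool → ℚ) × (List Bool → ℚ) →ₗ[ℚ] (List Bool → ℚ) :=
  (LinearMap.funLeft ℚ ℚ List.tail).coprod
    { toFun := pairLift
      map_add' := fun γ δ => by
        funext L
        rcases L with _ | ⟨a, _ | ⟨b, E⟩⟩ <;> simp [pairLift, ite_add_ite]
      map_smul' := fun c γ => by
        funext L
        rcases L with _ | ⟨a, _ | ⟨b, E⟩⟩ <;> simp [pairLift] }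

theorem liftPair_apply (β γ : List Bool → ℚ) (L : List Bool) :
    liftPair (β, γ) L = β L.tail + pairLift γ L :=
  rfl

-- `β` is read off at `ε` and at the words `(¬b) b E`, where `pairLift γ` vanishes.
theorem liftPair_injective : Function.Injective liftPair := by
  rw [← LinearMap.ker_eq_bot, LinearMap.ker_eq_bot']
  rintro ⟨β, γ⟩ h
  have hL (L : List Bool) : β L.tail + pairLift γ L = 0 := by
    simpa [liftPair_apply] using congrFun h L
  have hβ : β = 0 := by
    funext L
    rcases L with _ | ⟨b, E⟩
    · simpa [pairLift] using hL []
    · simpa [pairLift] using hL ((!b) :: b :: E)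
  have hγ : γ = 0 := by
    funext E
    simpa [pairLift, hβ] using hL (false :: false :: E)
  rw [hβ, hγ, Prod.mk_zero_zero]

theorem rank_add_rank_le_rank_dualBBSubmodule (n : ℕ) :
    Module.rank ℚ (dualBBSubmodule (n + 1)) + Module.rank ℚ (dualBBSubmodule n) ≤
      Module.rank ℚ (dualBBSubmodule (n + 2)) := by
  let W := dualBBSubmodule
  have hmaps (p : W (n + 1) × W n) : liftPair (p.1, p.2) ∈ W (n + 2) :=
    add_mem (comp_tail_mem_dualBBSubmodule p.1.2) (pairLift_mem_dualBBSubmodule p.2.2)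
  have hinj : Function.Injective (liftPair ∘ₗ (W (n + 1)).subtype.prodMap (W n).subtype) :=
    liftPair_injective.comp <|
      Prod.map_injective.2 ⟨Subtype.val_injective, Subtype.val_injective⟩
  rw [← rank_prod']
  exact LinearMap.rank_le_of_injective (LinearMap.codRestrict _ _ hmaps)
    fun p q hpq => hinj (congrArg Subtype.val hpq)

theorem one_le_rank_dualBBSubmodule (n : ℕ) : 1 ≤ Module.rank ℚ (dualBBSubmodule n) := by
  let χ : List Bool → ℚ := fun L => if L.length = n then 1 else 0
  have hχ : χ ∈ dualBBSubmodule n := by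
    refine ⟨fun E F h => ?_, fun E hE => if_neg hE⟩
    simp [χ, comp, length_chk, h]
  have : Nontrivial (dualBBSubmodule n) := by
    refine ⟨⟨⟨χ, hχ⟩, 0, fun h => ?_⟩⟩
    simpa [χ] using congrFun (congrArg Subtype.val h) (List.replicate n false)
  exact Cardinal.one_le_iff_pos.mpr rank_pos

theorem fib_succ_le_rank_dualBBSubmodule :
    ∀ n : ℕ, (Nat.fib (n + 1) : Cardinal) ≤ Module.rank ℚ (dualBBSubmodule n)
  | 0 => by simpa using one_le_rank_dualBBSubmodule 0
  | 1 => by simpa using one_le_rank_dualBBSubmodule 1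
  | n + 2 => by
    calc (Nat.fib (n + 3) : Cardinal)
        = Nat.fib (n + 2) + Nat.fib (n + 1) := by rw [Nat.fib_add_two, Nat.cast_add, add_comm]
      _ ≤ Module.rank ℚ (dualBBSubmodule (n + 1)) + Module.rank ℚ (dualBBSubmodule n) :=
          add_le_add (fib_succ_le_rank_dualBBSubmodule _) (fib_succ_le_rank_dualBBSubmodule _)
      _ ≤ Module.rank ℚ (dualBBSubmodule (n + 2)) := rank_add_rank_le_rank_dualBBSubmodule n

theorem dualBB_subspace_dim_ge_fib_general (n : ℕ) :
    ∃ W : Submodule ℚ (List Bool → ℚ),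
      (W : Set (List Bool → ℚ)) =
        {β | DualBB n β ∧ ∀ E : List Bool, E.length ≠ n → β E = 0} ∧
      (Nat.fib (n + 1) : Cardinal) ≤ Module.rank ℚ W :=
  ⟨dualBBSubmodule n, rfl, fib_succ_le_rank_dualBBSubmodule n⟩

theorem dualBB_subspace_dim_ge_fib (n : ℕ) (hn : 1 ≤ n) :
    ∃ W : Submodule ℚ (List Bool → ℚ),
      (W : Set (List Bool → ℚ)) =
        {β | DualBB n β ∧ ∀ E : List Bool, E.length ≠ n → β E = 0} ∧
      (Nat.fib (n + 1) : Cardinal) ≤ Module.rank ℚ W :=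
  dualBB_subspace_dim_ge_fib_general n
end

section
/- Let n ≥ 4, let T be a 0-1 word of length n−1, let S be a subset of [n−1] = {1, …, n−1} with n−1 ∈ S, and let i ∈ {2, …, n−2} be such that i−1 ∉ S and i ∉ S. Then h_{S,T} + h_{S∪{i−1,i},T} = h_{S∪{i},T} + h_{S∪{i−1},T}. -/
/-- `S(T)`: the set of (1-indexed) positions of the 1's of the word `T`. -/
def onesSet (T : List Bool) : Finset ℕ :=
  ((Finset.range T.length).filter (fun i => T.getD i false = true)).image (· + 1)

/-- The increasing list `s_1 < ⋯ < s_t` of positions of the 1's of `T`. -/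
def sListOf (T : List Bool) : List ℕ := (onesSet T).sort (· ≤ ·)

/-- `sfun n T j = s_j`, with the conventions `s_0 = 0` and `s_j = n` for `j > t`. -/
def sfun (n : ℕ) (T : List Bool) (j : ℕ) : ℕ :=
  if j = 0 then 0 else (sListOf T).getD (j - 1) n

/-- `tOf T = t`, the number of 1's of `T`. -/
def tOf (T : List Bool) : ℕ := (onesSet T).card

/-- `S ∩ (s_j, s_{j+1})`, the elements of `S` lying strictly between `s_j` and `s_{j+1}`. -/
def intv (n : ℕ) (T : List Bool) (S : Finset ℕ) (j : ℕ) : Finset ℕ :=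
  S.filter (fun x => sfun n T j < x ∧ x < sfun n T (j + 1))

/-- `S ∈ G(T)`: every interval `(s_j, s_{j+1})` with `0 ≤ j ≤ t-1` meets `S`, and any two
elements of `S` in a common interval `(s_j, s_{j+1})`, `0 ≤ j ≤ t`, are congruent mod 2. -/
def memG (n : ℕ) (T : List Bool) (S : Finset ℕ) : Prop :=
  (∀ j < tOf T, (intv n T S j).Nonempty) ∧
    (∀ j ≤ tOf T, ∀ x ∈ intv n T S j, ∀ y ∈ intv n T S j, x % 2 = y % 2)

/-- `sgn(S,T) = (-1)^(Σ_{j=0}^{t-1} (s_{j+1} - y_j - 1))`, with `y_j` the least element of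
`S ∩ (s_j, s_{j+1})` (any choice gives the same value when `S ∈ G(T)`). -/
noncomputable def sgnST (n : ℕ) (T : List Bool) (S : Finset ℕ) : ℚ :=
  (-1 : ℚ) ^ (∑ j ∈ Finset.range (tOf T),
    (sfun n T (j + 1) - WithTop.untopD 0 (intv n T S j).min - 1))

/-- `h_{S,T}`. -/
noncomputable def hST (n : ℕ) (T : List Bool) (S : Finset ℕ) : ℚ :=
  haveI := Classical.propDecidable (memG n T S)
  if memG n T S then sgnST n T S else 0

/-- `∂(E) = {i ∈ [m-1] : E_i ≠ E_{i+1}} ∪ {m}` for a word `E` of length `m` (1-indexed). -/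
def bnd (E : List Bool) : Finset ℕ :=
  ((Finset.Icc 1 (E.length - 1)).filter
      (fun i => E.getD (i - 1) false ≠ E.getD i false)) ∪ {E.length}

/-- A word is sparse if it does not begin with a 1 and has no two consecutive 1's. -/
def Sparse (E : List Bool) : Prop :=
  E.head? ≠ some true ∧ E.Chain' (fun a b => ¬(a = true ∧ b = true))

/-!
Inserting a position that lies in no gap `(s_j, s_{j+1})` changes none of the sets
`S ∩ (s_j, s_{j+1})`, hence not `h_{S,T}`. Otherwise `i - 1` and `i` lie in the same gap, and
`S ∪ {i-1, i}` violates the parity condition there. If `S` already meets that gap, the parity of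
its elements there decides which of `S ∪ {i-1}`, `S ∪ {i}` inherits `h_{S,T}`; the other
vanishes. If `S` misses the gap, then `h_{S,T} = 0` (the gap is not the last one, as it would
contain `n - 1`), and `S ∪ {i-1}`, `S ∪ {i}` are in `G(T)` together, with opposite signs.
-/

section
variable {n : ℕ} {T : List Bool} {S S' : Finset ℕ} {a j j' : ℕ}

lemma length_sListOf (T : List Bool) : (sListOf T).length = tOf T := Finset.length_sort _

lemma le_length_of_mem_onesSet (ha : a ∈ onesSet T) : a ≤ T.length := by
  simp only [onesSet, Finset.mem_image, Finset.mem_filter, Finset.mem_range] at ha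
  obtain ⟨b, ⟨hb, -⟩, rfl⟩ := ha
  omega

lemma sfun_of_tOf_lt (hj : tOf T < j) : sfun n T j = n := by
  rw [sfun, if_neg (by omega), List.getD_eq_default _ _ (by rw [length_sListOf]; omega)]

lemma monotone_sfun (hT : T.length ≤ n) : Monotone (sfun n T) := by
  refine monotone_nat_of_le_succ fun j => ?_
  rcases j with _ | j
  · exact Nat.zero_le _
  set L := sListOf T
  have hsorted : L.Pairwise (· < ·) := (Finset.sortedLT_sort _).pairwise
  have hle : ∀ m (hm : m < L.length), L[m] ≤ n := fun m hm =>
    (le_length_of_mem_onesSet ((Finset.mem_sort _).mp (List.getElem_mem hm))).trans hT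
  change L.getD j n ≤ L.getD (j + 1) n
  by_cases hj : j + 1 < L.length
  · rw [List.getD_eq_getElem _ _ (by omega), List.getD_eq_getElem _ _ hj]
    exact (List.pairwise_iff_getElem.mp hsorted _ _ (by omega) hj (by omega)).le
  rw [List.getD_eq_default _ _ (not_lt.mp hj)]
  by_cases hj' : j < L.length
  · rw [List.getD_eq_getElem _ _ hj']
    exact hle j hj'
  · rw [List.getD_eq_default _ _ (not_lt.mp hj')]

lemma le_tOf_of_lt_sfun (hlo : sfun n T j < a) (hhi : a < sfun n T (j + 1)) : j ≤ tOf T := by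
  by_contra! h
  rw [sfun_of_tOf_lt h] at hlo
  rw [sfun_of_tOf_lt (by omega)] at hhi
  omega

/-- Distinct gaps are separated by a position `s_k`, so their points differ by at least two. -/
lemma gap_eq_of_le_of_le_add_one (hT : T.length ≤ n) {b : ℕ}
    (hlo : sfun n T j < a) (hhi : a < sfun n T (j + 1))
    (hlo' : sfun n T j' < b) (hhi' : b < sfun n T (j' + 1)) (hab : a ≤ b) (hba : b ≤ a + 1) :
    j' = j := by
  rcases lt_trichotomy j' j with h | h | h
  · have := monotone_sfun hT (show j' + 1 ≤ j by omega); omega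
  · exact h
  · have := monotone_sfun hT (show j + 1 ≤ j' by omega); omega

@[simp]
lemma mem_intv {x : ℕ} : x ∈ intv n T S j ↔ x ∈ S ∧ sfun n T j < x ∧ x < sfun n T (j + 1) := by
  simp [intv]

lemma intv_insert (n : ℕ) (T : List Bool) (S : Finset ℕ) (a j : ℕ) :
    intv n T (insert a S) j =
      if sfun n T j < a ∧ a < sfun n T (j + 1) then insert a (intv n T S j)
      else intv n T S j := by
  simp only [intv, Finset.filter_insert]

lemma intv_insert_self (hlo : sfun n T j < a) (hhi : a < sfun n T (j + 1)) :
    intv n T (insert a S) j = insert a (intv n T S j) := by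
  rw [intv_insert, if_pos ⟨hlo, hhi⟩]

lemma intv_insert_of_ne (hT : T.length ≤ n) (hlo : sfun n T j < a) (hhi : a < sfun n T (j + 1))
    (hj : j' ≠ j) : intv n T (insert a S) j' = intv n T S j' := by
  rw [intv_insert, if_neg]
  rintro ⟨hlo', hhi'⟩
  exact hj (gap_eq_of_le_of_le_add_one hT hlo hhi hlo' hhi' le_rfl (Nat.le_succ a))

lemma untopD_min_mem {s : Finset ℕ} (hs : s.Nonempty) : WithTop.untopD 0 s.min ∈ s := by
  rw [← Finset.coe_min' hs, WithTop.untopD_coe]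
  exact s.min'_mem hs

noncomputable def gapSign (n : ℕ) (T : List Bool) (S : Finset ℕ) (j : ℕ) : ℚ :=
  (-1 : ℚ) ^ (sfun n T (j + 1) - WithTop.untopD 0 (intv n T S j).min - 1)

lemma sgnST_eq_prod_gapSign : sgnST n T S = ∏ j ∈ Finset.range (tOf T), gapSign n T S j := by
  rw [sgnST, ← Finset.prod_pow_eq_pow_sum]
  rfl

lemma gapSign_eq_of_mod_two_eq (hA : (intv n T S j).Nonempty) (hA' : (intv n T S' j).Nonempty)
    (hpar : ∀ x ∈ intv n T S j, ∀ y ∈ intv n T S' j, x % 2 = y % 2) :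
    gapSign n T S j = gapSign n T S' j := by
  have hy := untopD_min_mem hA
  have hy' := untopD_min_mem hA'
  have := hpar _ hy _ hy'
  have := (mem_intv.mp hy).2.2
  have := (mem_intv.mp hy').2.2
  rw [gapSign, gapSign, neg_one_pow_eq_pow_mod_two, neg_one_pow_eq_pow_mod_two
    (sfun n T (j + 1) - _ - 1)]
  congr 1
  omega

lemma gapSign_of_intv_eq_singleton (h : intv n T S j = {a}) :
    gapSign n T S j = (-1 : ℚ) ^ (sfun n T (j + 1) - a - 1) := by
  rw [gapSign, h, Finset.min_singleton, WithTop.untopD_coe]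

lemma sgnST_eq_of_gapSign_eq (hout : ∀ j' ≠ j, intv n T S' j' = intv n T S j')
    (hj : gapSign n T S' j = gapSign n T S j) : sgnST n T S' = sgnST n T S := by
  simp only [sgnST_eq_prod_gapSign]
  refine Finset.prod_congr rfl fun j' _ => ?_
  rcases eq_or_ne j' j with rfl | h
  · exact hj
  · simp only [gapSign, hout j' h]

lemma sgnST_eq_neg_of_gapSign_eq_neg (hjt : j < tOf T)
    (hout : ∀ j' ≠ j, intv n T S' j' = intv n T S j')
    (hj : gapSign n T S' j = -gapSign n T S j) : sgnST n T S' = -sgnST n T S := by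
  simp only [sgnST_eq_prod_gapSign]
  rw [← Finset.mul_prod_erase _ _ (Finset.mem_range.mpr hjt),
    ← Finset.mul_prod_erase _ _ (Finset.mem_range.mpr hjt), hj, neg_mul]
  congr 2
  refine Finset.prod_congr rfl fun j' hj' => ?_
  simp only [gapSign, hout j' (Finset.ne_of_mem_erase hj')]

lemma memG_of_intv_eq_of_ne (hS : memG n T S) (hout : ∀ j' ≠ j, intv n T S' j' = intv n T S j')
    (hne : j < tOf T → (intv n T S' j).Nonempty)
    (hpar : ∀ x ∈ intv n T S' j, ∀ y ∈ intv n T S' j, x % 2 = y % 2) : memG n T S' := by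
  refine ⟨fun j' hj' => ?_, fun j' hj' => ?_⟩
  · rcases eq_or_ne j' j with rfl | h
    · exact hne hj'
    · exact hout j' h ▸ hS.1 j' hj'
  · rcases eq_or_ne j' j with rfl | h
    · exact hpar
    · exact hout j' h ▸ hS.2 j' hj'

lemma not_memG_of_mod_two_ne (hj : j ≤ tOf T) {x y : ℕ} (hx : x ∈ intv n T S j)
    (hy : y ∈ intv n T S j) (hxy : x % 2 ≠ y % 2) : ¬memG n T S :=
  fun h => hxy (h.2 j hj x hx y hy)

lemma hST_of_memG (h : memG n T S) : hST n T S = sgnST n T S := by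
  rw [hST, if_pos h]

lemma hST_of_not_memG (h : ¬memG n T S) : hST n T S = 0 := by
  rw [hST, if_neg h]

lemma hST_insert_of_forall_not_mem_gap
    (ha : ∀ j, ¬(sfun n T j < a ∧ a < sfun n T (j + 1))) : hST n T (insert a S) = hST n T S := by
  have h : ∀ j, intv n T (insert a S) j = intv n T S j := fun j => by
    rw [intv_insert, if_neg (ha j)]
  have hG : memG n T (insert a S) ↔ memG n T S := by simp only [memG, h]
  by_cases hS : memG n T S
  · rw [hST_of_memG hS, hST_of_memG (hG.mpr hS)]
    simp only [sgnST, h]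
  · rw [hST_of_not_memG hS, hST_of_not_memG (mt hG.mp hS)]

lemma hST_eq_zero_of_intv_eq_empty (hj : j < tOf T) (hA : intv n T S j = ∅) : hST n T S = 0 :=
  hST_of_not_memG fun h => by simpa [hA] using h.1 j hj

lemma hST_insert_of_mod_two_eq (hT : T.length ≤ n) (hlo : sfun n T j < a) (hhi : a < sfun n T (j + 1)) (hS : memG n T S) {m : ℕ}
    (hm : m ∈ intv n T S j) (hpa : a % 2 = m % 2) : hST n T (insert a S) = hST n T S := by
  have hj := le_tOf_of_lt_sfun hlo hhi
  have hout : ∀ j' ≠ j, intv n T (insert a S) j' = intv n T S j' :=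
    fun _ => intv_insert_of_ne hT hlo hhi
  have ha : a ∈ intv n T (insert a S) j := by simp [hlo, hhi]
  have hpar : ∀ x ∈ intv n T (insert a S) j, x % 2 = m % 2 := by
    rw [intv_insert_self hlo hhi]
    rintro x hx
    rcases Finset.mem_insert.mp hx with rfl | hx
    · exact hpa
    · exact hS.2 j hj x hx m hm
  have hG : memG n T (insert a S) := memG_of_intv_eq_of_ne hS hout (fun _ => ⟨a, ha⟩)
    fun x hx y hy => (hpar x hx).trans (hpar y hy).symm
  rw [hST_of_memG hG, hST_of_memG hS, sgnST_eq_of_gapSign_eq hout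
    (gapSign_eq_of_mod_two_eq ⟨a, ha⟩ ⟨m, hm⟩
      fun x hx y hy => (hpar x hx).trans (hS.2 j hj y hy m hm).symm)]

lemma hST_insert_of_mod_two_ne (hlo : sfun n T j < a) (hhi : a < sfun n T (j + 1)) {m : ℕ}
    (hm : m ∈ intv n T S j) (hpa : a % 2 ≠ m % 2) : hST n T (insert a S) = 0 :=
  hST_of_not_memG <| not_memG_of_mod_two_ne (le_tOf_of_lt_sfun hlo hhi)
    (by simp [hlo, hhi]) (by rw [intv_insert_self hlo hhi]; exact Finset.mem_insert_of_mem hm) hpa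

lemma hST_insert_of_not_memG (hT : T.length ≤ n) (hlo : sfun n T j < a)
    (hhi : a < sfun n T (j + 1)) (hS : ¬memG n T S) (hA : (intv n T S j).Nonempty) :
    hST n T (insert a S) = 0 := by
  have hj := le_tOf_of_lt_sfun hlo hhi
  have hsub : intv n T S j ⊆ intv n T (insert a S) j := by
    rw [intv_insert_self hlo hhi]
    exact Finset.subset_insert _ _
  refine hST_of_not_memG fun h => hS (memG_of_intv_eq_of_ne h
    (fun _ hj' => (intv_insert_of_ne hT hlo hhi hj').symm) (fun _ => hA) ?_)
  exact fun x hx y hy => h.2 j hj x (hsub hx) y (hsub hy)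

lemma hST_insert_add_hST_insert_succ (hT : T.length ≤ n) (hlo : sfun n T j < a)
    (hhi : a + 1 < sfun n T (j + 1)) (hA : (intv n T S j).Nonempty) :
    hST n T (insert a S) + hST n T (insert (a + 1) S) = hST n T S := by
  obtain ⟨m, hm⟩ := hA
  have hhi' : a < sfun n T (j + 1) := by omega
  have hlo' : sfun n T j < a + 1 := by omega
  by_cases hS : memG n T S
  · by_cases hpa : a % 2 = m % 2
    · rw [hST_insert_of_mod_two_eq hT hlo hhi' hS hm hpa,
        hST_insert_of_mod_two_ne hlo' hhi hm (by omega), add_zero]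
    · rw [hST_insert_of_mod_two_ne hlo hhi' hm hpa,
        hST_insert_of_mod_two_eq hT hlo' hhi hS hm (by omega), zero_add]
  · rw [hST_insert_of_not_memG hT hlo hhi' hS ⟨m, hm⟩,
      hST_insert_of_not_memG hT hlo' hhi hS ⟨m, hm⟩, hST_of_not_memG hS, add_zero]

lemma hST_insert_insert_succ (hlo : sfun n T j < a) (hhi : a + 1 < sfun n T (j + 1)) :
    hST n T (insert a (insert (a + 1) S)) = 0 :=
  hST_of_not_memG <| not_memG_of_mod_two_ne (x := a) (y := a + 1)
    (le_tOf_of_lt_sfun hlo (by omega : a < _)) (by simp [hlo, hhi.trans' (Nat.lt_succ_self a)])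
    (by simp [hhi, hlo.trans (Nat.lt_succ_self a)]) (by omega)

lemma hST_insert_succ_eq_neg (hT : T.length ≤ n) (hjt : j < tOf T) (hA : intv n T S j = ∅)
    (hlo : sfun n T j < a) (hhi : a + 1 < sfun n T (j + 1)) :
    hST n T (insert (a + 1) S) = -hST n T (insert a S) := by
  have hhi' : a < sfun n T (j + 1) := by omega
  have hlo' : sfun n T j < a + 1 := by omega
  have hout : ∀ j' ≠ j, intv n T (insert (a + 1) S) j' = intv n T (insert a S) j' :=
    fun _ hj' => by rw [intv_insert_of_ne hT hlo' hhi hj', intv_insert_of_ne hT hlo hhi' hj']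
  have h₀ : intv n T (insert a S) j = {a} := by rw [intv_insert_self hlo hhi', hA]; rfl
  have h₁ : intv n T (insert (a + 1) S) j = {a + 1} := by rw [intv_insert_self hlo' hhi, hA]; rfl
  have hG : memG n T (insert (a + 1) S) ↔ memG n T (insert a S) :=
    ⟨fun h => memG_of_intv_eq_of_ne h (fun j' hj' => (hout j' hj').symm) (by simp [h₀])
      (by simp [h₀]),
    fun h => memG_of_intv_eq_of_ne h hout (by simp [h₁]) (by simp [h₁])⟩
  have hsgn : sgnST n T (insert (a + 1) S) = -sgnST n T (insert a S) := by
    refine sgnST_eq_neg_of_gapSign_eq_neg hjt hout ?_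
    rw [gapSign_of_intv_eq_singleton h₀, gapSign_of_intv_eq_singleton h₁,
      show sfun n T (j + 1) - a - 1 = sfun n T (j + 1) - (a + 1) - 1 + 1 by omega, pow_succ]
    ring
  by_cases h : memG n T (insert a S)
  · rw [hST_of_memG h, hST_of_memG (hG.mpr h), hsgn]
  · rw [hST_of_not_memG h, hST_of_not_memG (mt hG.mp h), neg_zero]

lemma hST_add_hST_insert_insert_succ (hT : T.length ≤ n) (hStop : n - 1 ∈ S)
    (hlo : sfun n T j < a) (hhi : a + 1 < sfun n T (j + 1)) :
    hST n T S + hST n T (insert a (insert (a + 1) S)) =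
      hST n T (insert (a + 1) S) + hST n T (insert a S) := by
  rw [hST_insert_insert_succ hlo hhi, add_zero]
  rcases (intv n T S j).eq_empty_or_nonempty with hA | hA
  · have hjt : j < tOf T := by
      refine (le_tOf_of_lt_sfun hlo (by omega : a < _)).lt_of_ne fun hj => ?_
      rw [sfun_of_tOf_lt (by omega)] at hhi
      have : n - 1 ∈ intv n T S j := mem_intv.mpr
        ⟨hStop, by omega, by rw [sfun_of_tOf_lt (by omega)]; omega⟩
      simp [hA] at this
    rw [hST_eq_zero_of_intv_eq_empty hjt hA, hST_insert_succ_eq_neg hT hjt hA hlo hhi,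
      neg_add_cancel]
  · rw [add_comm, hST_insert_add_hST_insert_succ hT hlo hhi hA]

end

theorem hST_rel_general (n : ℕ) (T : List Bool) (hT : T.length = n - 1)
    (S : Finset ℕ) (hStop : n - 1 ∈ S) (i : ℕ) :
    hST n T S + hST n T (S ∪ {i - 1, i}) =
      hST n T (S ∪ {i}) + hST n T (S ∪ {i - 1}) := by
  have hTn : T.length ≤ n := by omega
  rw [show S ∪ {i - 1, i} = insert (i - 1) (insert i S) by ext; simp,
    Finset.union_singleton, Finset.union_singleton]
  by_cases h₀ : ∃ j, sfun n T j < i - 1 ∧ i - 1 < sfun n T (j + 1)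
  swap
  · rw [hST_insert_of_forall_not_mem_gap (not_exists.mp h₀),
      hST_insert_of_forall_not_mem_gap (not_exists.mp h₀), add_comm]
  by_cases h₁ : ∃ j, sfun n T j < i ∧ i < sfun n T (j + 1)
  swap
  · rw [Finset.insert_comm, hST_insert_of_forall_not_mem_gap (not_exists.mp h₁),
      hST_insert_of_forall_not_mem_gap (not_exists.mp h₁)]
  obtain ⟨j, hlo, hhi⟩ := h₀
  obtain ⟨j', hlo', hhi'⟩ := h₁
  obtain rfl := gap_eq_of_le_of_le_add_one hTn hlo hhi hlo' hhi' (by omega) (by omega)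
  obtain ⟨a, rfl⟩ : ∃ a, i = a + 1 := ⟨i - 1, by omega⟩
  rw [Nat.add_sub_cancel] at hlo ⊢
  exact hST_add_hST_insert_insert_succ hTn hStop hlo hhi'

theorem hST_rel (n : ℕ) (hn : 4 ≤ n) (T : List Bool) (hT : T.length = n - 1)
    (S : Finset ℕ) (hS : S ⊆ Finset.Icc 1 (n - 1)) (hStop : n - 1 ∈ S)
    (i : ℕ) (hi2 : 2 ≤ i) (hin : i ≤ n - 2) (hi1S : i - 1 ∉ S) (hiS : i ∉ S) :
    hST n T S + hST n T (S ∪ {i - 1, i}) =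
      hST n T (S ∪ {i}) + hST n T (S ∪ {i - 1}) :=
  hST_rel_general n T hT S hStop i
end

section
/- Let V = ℝ^l with standard basis α_1, …, α_l, and write x_i(v) for the i-th coordinate of v ∈ V. Let Φ⁺ ⊆ V be a set of nonzero vectors, each with all coordinates nonnegative, such that no two distinct elements of Φ⁺ are positive scalar multiples of each other. Let p : V → ℝ be a linear functional with p(β) ≥ 0 for all β ∈ Φ⁺, let Φ₀⁺ = {β ∈ Φ⁺ : p(β) = 0}, and let ≺ be a strict total order on Φ₀⁺ which is a reflection ordering on Φ₀⁺. Define the relation ≪ on Φ⁺ by: β ≪ β' if and only if either (p(β) = p(β') = 0 and β ≺ β'), or (p(β) ≠ 0 and p(β') = 0), or (p(β) ≠ 0, p(β') ≠ 0, and β/p(β) <_lex β'/p(β')), where v <_lex w means that for some k, x_k(v) < x_k(w) and x_m(v) = x_m(w) for all m < k. Then ≪ is a strict total order on Φ⁺ which is a reflection ordering on Φ⁺. -/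
/-- `r` is a strict total order on `Ψ` which is a reflection ordering on `Ψ`: it is
irreflexive, transitive and total on `Ψ`, and whenever `β, β₁, β₂ ∈ Ψ`, `c₁, c₂ > 0`,
`β = c₁ • β₁ + c₂ • β₂` and `r β₁ β₂`, then `r β₁ β` and `r β β₂`. -/
def IsReflectionOrdering {l : ℕ} (Ψ : Set (Fin l → ℝ))
    (r : (Fin l → ℝ) → (Fin l → ℝ) → Prop) : Prop :=
  (∀ x ∈ Ψ, ¬r x x) ∧
  (∀ x ∈ Ψ, ∀ y ∈ Ψ, ∀ z ∈ Ψ, r x y → r y z → r x z) ∧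
  (∀ x ∈ Ψ, ∀ y ∈ Ψ, x ≠ y → r x y ∨ r y x) ∧
  (∀ β ∈ Ψ, ∀ β₁ ∈ Ψ, ∀ β₂ ∈ Ψ, ∀ c₁ c₂ : ℝ, 0 < c₁ → 0 < c₂ →
    β = c₁ • β₁ + c₂ • β₂ → r β₁ β₂ → r β₁ β ∧ r β β₂)

/-- Lexicographic order on `ℝ^l` with respect to the standard coordinates. -/
def lexLt {l : ℕ} (v w : Fin l → ℝ) : Prop :=
  ∃ k : Fin l, v k < w k ∧ ∀ m : Fin l, m < k → v m = w m

/-!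
On `{β ∈ Φ | p β ≠ 0}` the functional `p` is positive, and `β ↦ (p β)⁻¹ • β` sends a positive
combination `c₁ • β₁ + c₂ • β₂` into the open segment between the images of `β₁` and `β₂`. The
lexicographic order is linear and compatible with the vector space structure, so it puts points of
an open segment strictly between its ends; no two roots being positive multiples of each other makes
it total. Putting this part before `{β ∈ Φ | p β = 0}` respects reflections because
`c₁ • β₁ + c₂ • β₂` with `p β₂ = 0` normalises to `(p β₁)⁻¹ • β₁` plus a nonnegative nonzero
multiple of `β₂`, which is lexicographically larger.
-/

lemma inv_smul_mem_openSegment {𝕜 E : Type*} [Field 𝕜] [LinearOrder 𝕜] [IsStrictOrderedRing 𝕜]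
    [AddCommGroup E] [Module 𝕜 E] (p : E →ₗ[𝕜] 𝕜) {x y : E} (hx : 0 < p x) (hy : 0 < p y)
    {a b : 𝕜} (ha : 0 < a) (hb : 0 < b) :
    (p (a • x + b • y))⁻¹ • (a • x + b • y) ∈ openSegment 𝕜 ((p x)⁻¹ • x) ((p y)⁻¹ • y) := by
  have hs : p (a • x + b • y) = a * p x + b * p y := by simp
  refine ⟨a * p x / (a * p x + b * p y), b * p y / (a * p x + b * p y), by positivity,
    by positivity, by field_simp, ?_⟩
  rw [hs, smul_smul, smul_smul, smul_add, smul_smul, smul_smul]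
  congr 2 <;> field_simp

section

variable {l : ℕ}

lemma lexLt_iff_toLex_lt {v w : Fin l → ℝ} : lexLt v w ↔ toLex v < toLex w := by
  simp only [lexLt]
  exact exists_congr fun k => and_comm

lemma lexLt_of_lt {v w : Fin l → ℝ} (h : v < w) : lexLt v w :=
  lexLt_iff_toLex_lt.2 (Pi.toLex_strictMono h)

lemma lexLt_of_mem_openSegment {v w x : Fin l → ℝ} (h : lexLt v w)
    (hx : x ∈ openSegment ℝ v w) : lexLt v x ∧ lexLt x w := by
  obtain ⟨k, hk, heq⟩ := h
  obtain ⟨a, b, ha, hb, hab, rfl⟩ := hx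
  have hfromv : ∀ m, (a • v + b • w) m = v m + b * (w m - v m) := fun m => by
    simp only [Pi.add_apply, Pi.smul_apply, smul_eq_mul]; linear_combination v m * hab
  have hfromw : ∀ m, (a • v + b • w) m = w m - a * (w m - v m) := fun m => by
    simp only [Pi.add_apply, Pi.smul_apply, smul_eq_mul]; linear_combination w m * hab
  refine ⟨⟨k, ?_, fun m hm => ?_⟩, ⟨k, ?_, fun m hm => ?_⟩⟩
  · rw [hfromv]; exact lt_add_of_pos_right _ (mul_pos hb (sub_pos.2 hk))
  · rw [hfromv, heq m hm]; ring
  · rw [hfromw]; exact sub_lt_self _ (mul_pos ha (sub_pos.2 hk))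
  · rw [hfromw, heq m hm]; ring

lemma lexLt_inv_smul_add_of_map_eq_zero (p : (Fin l → ℝ) →ₗ[ℝ] ℝ) {x y : Fin l → ℝ}
    (hx : 0 < p x) (hpy : p y = 0) (hy : 0 < y) {a b : ℝ} (ha : 0 < a) (hb : 0 < b) :
    lexLt ((p x)⁻¹ • x) ((p (a • x + b • y))⁻¹ • (a • x + b • y)) := by
  have hs : (p (a • x + b • y))⁻¹ • (a • x + b • y) = (p x)⁻¹ • x + (b / (a * p x)) • y := by
    simp only [map_add, map_smul, hpy, smul_eq_mul, mul_zero, add_zero, smul_add, smul_smul]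
    congr 2 <;> field_simp
  rw [hs]
  exact lexLt_of_lt (lt_add_of_pos_right _ (smul_pos (by positivity) hy))

lemma isReflectionOrdering_lexLt_inv_smul (Ψ : Set (Fin l → ℝ))
    (p : (Fin l → ℝ) →ₗ[ℝ] ℝ) (hp : ∀ β ∈ Ψ, 0 < p β)
    (hmul : ∀ β ∈ Ψ, ∀ β' ∈ Ψ, ∀ c : ℝ, 0 < c → β = c • β' → β = β') :
    IsReflectionOrdering Ψ (fun β β' => lexLt ((p β)⁻¹ • β) ((p β')⁻¹ • β')) := by
  simp only [lexLt_iff_toLex_lt]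
  refine ⟨fun β _ => lt_irrefl _, fun β _ β' _ β'' _ => lt_trans, fun β hβ β' hβ' hne => ?_, ?_⟩
  · refine lt_or_gt_of_ne fun h =>
      hne (hmul β hβ β' hβ' (p β / p β') (div_pos (hp β hβ) (hp β' hβ')) ?_)
    rw [div_eq_mul_inv, mul_smul, ← toLex_inj.1 h, smul_inv_smul₀ (hp β hβ).ne']
  · rintro β hβ β₁ hβ₁ β₂ hβ₂ c₁ c₂ hc₁ hc₂ rfl h
    simp only [← lexLt_iff_toLex_lt] at h ⊢
    exact lexLt_of_mem_openSegment h (inv_smul_mem_openSegment p (hp β₁ hβ₁) (hp β₂ hβ₂) hc₁ hc₂)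

theorem IsReflectionOrdering.ordinalSum {Φ : Set (Fin l → ℝ)}
    (p : (Fin l → ℝ) →ₗ[ℝ] ℝ) (hp : ∀ β ∈ Φ, 0 ≤ p β)
    {r₀ r₁ : (Fin l → ℝ) → (Fin l → ℝ) → Prop}
    (h₀ : IsReflectionOrdering {β ∈ Φ | p β = 0} r₀)
    (h₁ : IsReflectionOrdering {β ∈ Φ | p β ≠ 0} r₁)
    (hdom : ∀ β₁ ∈ Φ, ∀ β₂ ∈ Φ, ∀ c₁ c₂ : ℝ, 0 < c₁ → 0 < c₂ → p β₁ ≠ 0 → p β₂ = 0 →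
      r₁ β₁ (c₁ • β₁ + c₂ • β₂)) :
    IsReflectionOrdering Φ (fun β β' =>
      (p β = 0 ∧ p β' = 0 ∧ r₀ β β') ∨ (p β ≠ 0 ∧ p β' = 0) ∨ (p β ≠ 0 ∧ p β' ≠ 0 ∧ r₁ β β')) := by
  obtain ⟨irrefl₀, trans₀, total₀, refl₀⟩ := h₀
  obtain ⟨irrefl₁, trans₁, total₁, refl₁⟩ := h₁
  refine ⟨?_, ?_, ?_, ?_⟩
  · rintro x hx (⟨hx0, -, h⟩ | ⟨hx0, hx0'⟩ | ⟨hx0, -, h⟩)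
    exacts [irrefl₀ x ⟨hx, hx0⟩ h, hx0 hx0', irrefl₁ x ⟨hx, hx0⟩ h]
  · rintro x hx y hy z hz (⟨hx0, hy0, hxy⟩ | ⟨hx0, hy0⟩ | ⟨hx0, hy0, hxy⟩)
      (⟨hy0', hz0, hyz⟩ | ⟨hy0', hz0⟩ | ⟨hy0', hz0, hyz⟩)
    all_goals try contradiction
    · exact .inl ⟨hx0, hz0, trans₀ x ⟨hx, hx0⟩ y ⟨hy, hy0⟩ z ⟨hz, hz0⟩ hxy hyz⟩
    · exact .inr (.inl ⟨hx0, hz0⟩)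
    · exact .inr (.inl ⟨hx0, hz0⟩)
    · exact .inr (.inr ⟨hx0, hz0, trans₁ x ⟨hx, hx0⟩ y ⟨hy, hy0⟩ z ⟨hz, hz0⟩ hxy hyz⟩)
  · intro x hx y hy hne
    by_cases hx0 : p x = 0 <;> by_cases hy0 : p y = 0
    · exact (total₀ x ⟨hx, hx0⟩ y ⟨hy, hy0⟩ hne).imp (fun h => .inl ⟨hx0, hy0, h⟩)
        (fun h => .inl ⟨hy0, hx0, h⟩)
    · exact .inr (.inr (.inl ⟨hy0, hx0⟩))
    · exact .inl (.inr (.inl ⟨hx0, hy0⟩))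
    · exact (total₁ x ⟨hx, hx0⟩ y ⟨hy, hy0⟩ hne).imp (fun h => .inr (.inr ⟨hx0, hy0, h⟩))
        (fun h => .inr (.inr ⟨hy0, hx0, h⟩))
  · rintro β hβ β₁ hβ₁ β₂ hβ₂ c₁ c₂ hc₁ hc₂ rfl h
    have hlevel : p (c₁ • β₁ + c₂ • β₂) = 0 ↔ p β₁ = 0 ∧ p β₂ = 0 := by
      rw [map_add, map_smul, map_smul, smul_eq_mul, smul_eq_mul, add_eq_zero_iff_of_nonneg
        (mul_nonneg hc₁.le (hp β₁ hβ₁)) (mul_nonneg hc₂.le (hp β₂ hβ₂))]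
      simp [hc₁.ne', hc₂.ne']
    rcases h with ⟨h1, h2, h⟩ | ⟨h1, h2⟩ | ⟨h1, h2, h⟩
    · have hβ0 : p (c₁ • β₁ + c₂ • β₂) = 0 := hlevel.2 ⟨h1, h2⟩
      obtain ⟨hl, hr⟩ := refl₀ _ ⟨hβ, hβ0⟩ β₁ ⟨hβ₁, h1⟩ β₂ ⟨hβ₂, h2⟩ c₁ c₂ hc₁ hc₂ rfl h
      exact ⟨.inl ⟨h1, hβ0, hl⟩, .inl ⟨hβ0, h2, hr⟩⟩
    · have hβ0 : p (c₁ • β₁ + c₂ • β₂) ≠ 0 := fun h => h1 (hlevel.1 h).1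
      exact ⟨.inr (.inr ⟨h1, hβ0, hdom β₁ hβ₁ β₂ hβ₂ c₁ c₂ hc₁ hc₂ h1 h2⟩), .inr (.inl ⟨hβ0, h2⟩)⟩
    · have hβ0 : p (c₁ • β₁ + c₂ • β₂) ≠ 0 := fun h => h1 (hlevel.1 h).1
      obtain ⟨hl, hr⟩ := refl₁ _ ⟨hβ, hβ0⟩ β₁ ⟨hβ₁, h1⟩ β₂ ⟨hβ₂, h2⟩ c₁ c₂ hc₁ hc₂ rfl h
      exact ⟨.inr (.inr ⟨h1, hβ0, hl⟩), .inr (.inr ⟨hβ0, h2, hr⟩)⟩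

end

theorem reflection_ordering_construction (l : ℕ) (Φ : Set (Fin l → ℝ))
    (hΦ : ∀ β ∈ Φ, β ≠ 0 ∧ ∀ i : Fin l, 0 ≤ β i)
    (hmul : ∀ β ∈ Φ, ∀ β' ∈ Φ, ∀ c : ℝ, 0 < c → β = c • β' → β = β')
    (p : (Fin l → ℝ) →ₗ[ℝ] ℝ) (hp : ∀ β ∈ Φ, 0 ≤ p β)
    (prec : (Fin l → ℝ) → (Fin l → ℝ) → Prop)
    (hprec : IsReflectionOrdering {β ∈ Φ | p β = 0} prec) :
    IsReflectionOrdering Φ (fun β β' =>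
      (p β = 0 ∧ p β' = 0 ∧ prec β β') ∨
      (p β ≠ 0 ∧ p β' = 0) ∨
      (p β ≠ 0 ∧ p β' ≠ 0 ∧ lexLt ((p β)⁻¹ • β) ((p β')⁻¹ • β'))) := by
  have hpos : ∀ β ∈ {β ∈ Φ | p β ≠ 0}, 0 < p β := fun β hβ => (hp β hβ.1).lt_of_ne' hβ.2
  refine IsReflectionOrdering.ordinalSum p hp hprec
    (isReflectionOrdering_lexLt_inv_smul _ p hpos fun β hβ β' hβ' => hmul β hβ.1 β' hβ'.1) ?_
  intro β₁ hβ₁ β₂ hβ₂ c₁ c₂ hc₁ hc₂ h1 h2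
  have hβ₂pos : 0 < β₂ := lt_of_le_of_ne (hΦ β₂ hβ₂).2 (hΦ β₂ hβ₂).1.symm
  exact lexLt_inv_smul_add_of_map_eq_zero p (hpos β₁ ⟨hβ₁, h1⟩) h2 hβ₂pos hc₁ hc₂
end

section
/- With the notation of the 3-complete setup, let u ∈ W' and let i, j ∈ {2, …, l} with i ≠ j. Then (a) d_i(s_i u) = −d_i(u), and (b) d_j(s_i u) = d_i(u) + d_j(u). -/
/-! With `S = Σ_k c_k` one has `d_i = 3 c_i - S`. Since `ρ(s_i)` changes only the `i`-th
coordinate, `c_i ↦ S - 2 c_i`, the sum becomes `2 S - 3 c_i`; hence `d_i ↦ S - 3 c_i = -d_i` and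
`d_j ↦ 3 c_j - 2 S + 3 c_i = d_i + d_j`. -/

/-- `c_k(w)`: the `k`-th coordinate of `ρ(w)(α_{i0})`, where `α_{i0}` is the `i0`-th
standard basis vector. -/
noncomputable def coeffc {l : ℕ} {W : Type*} [Group W]
    (ρ : W →* Module.End ℝ (Fin l → ℝ)) (i0 : Fin l) (w : W) (k : Fin l) : ℝ :=
  ρ w (Pi.single i0 1) k

/-- `d_i(w) = 2 c_i(w) - Σ_{k ≠ i} c_k(w)`. -/
noncomputable def coeffd {l : ℕ} {W : Type*} [Group W]
    (ρ : W →* Module.End ℝ (Fin l → ℝ)) (i0 : Fin l) (w : W) (i : Fin l) : ℝ :=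
  2 * coeffc ρ i0 w i - ∑ k ∈ Finset.univ.erase i, coeffc ρ i0 w k

section Reflection

variable {R ι : Type*} [CommRing R] [Fintype ι] [DecidableEq ι]

theorem LinearMap.apply_eq_add_smul_single_of_apply_single
    (f : (ι → R) →ₗ[R] ι → R) (i : ι)
    (hi : f (Pi.single i 1) = -Pi.single i 1)
    (hj : ∀ j, j ≠ i → f (Pi.single j 1) = Pi.single i 1 + Pi.single j 1) (v : ι → R) :
    f v = v + (∑ k, v k - 3 * v i) • Pi.single i 1 := by
  let g : (ι → R) →ₗ[R] ι → R :=
    LinearMap.id + LinearMap.smulRight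
      (∑ k, LinearMap.proj k - (3 : R) • LinearMap.proj i : (ι → R) →ₗ[R] R) (Pi.single i 1)
  have hfg : f = g := by
    refine (Pi.basisFun R ι).ext fun j => ?_
    rcases eq_or_ne j i with rfl | hji
    · simp [g, hi, show (1 - 3 : R) = -2 by norm_num, two_smul]
    · simp [g, hj j hji, hji, add_comm]
  simp [hfg, g]

theorem LinearMap.sum_apply_eq_of_apply_single
    (f : (ι → R) →ₗ[R] ι → R) (i : ι)
    (hi : f (Pi.single i 1) = -Pi.single i 1)
    (hj : ∀ j, j ≠ i → f (Pi.single j 1) = Pi.single i 1 + Pi.single j 1) (v : ι → R) :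
    ∑ k, f v k = 2 * ∑ k, v k - 3 * v i := by
  simp only [f.apply_eq_add_smul_single_of_apply_single i hi hj, Pi.add_apply, Pi.smul_apply,
    smul_eq_mul, Finset.sum_add_distrib, ← Finset.mul_sum, Finset.sum_pi_single',
    Finset.mem_univ, if_true]
  ring

end Reflection

theorem coeffc_mul {l : ℕ} {W : Type*} [Group W]
    (ρ : W →* Module.End ℝ (Fin l → ℝ)) (i0 : Fin l) (g w : W) :
    coeffc ρ i0 (g * w) = ρ g (coeffc ρ i0 w) := by
  ext k
  simp only [coeffc, map_mul, Module.End.mul_apply]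
  rfl

theorem coeffd_eq_three_mul_coeffc_sub_sum {l : ℕ} {W : Type*} [Group W]
    (ρ : W →* Module.End ℝ (Fin l → ℝ)) (i0 : Fin l) (w : W) (i : Fin l) :
    coeffd ρ i0 w i = 3 * coeffc ρ i0 w i - ∑ k, coeffc ρ i0 w k := by
  rw [coeffd, Finset.sum_erase_eq_sub (Finset.mem_univ i)]
  ring

theorem coeffd_recursion_general (l : ℕ) (M : CoxeterMatrix (Fin l))
    (W : Type*) [Group W] (cs : CoxeterSystem M W)
    (ρ : W →* Module.End ℝ (Fin l → ℝ))
    (hρ : ∀ i : Fin l,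
      (ρ (cs.simple i)) (Pi.single i (1 : ℝ)) = -Pi.single i 1 ∧
      ∀ j : Fin l, j ≠ i →
        (ρ (cs.simple i)) (Pi.single j (1 : ℝ)) = Pi.single i 1 + Pi.single j 1)
    (i0 : Fin l)
    (u : W)
    (i j : Fin l) (hij : i ≠ j) :
    coeffd ρ i0 (cs.simple i * u) i = -coeffd ρ i0 u i ∧
      coeffd ρ i0 (cs.simple i * u) j = coeffd ρ i0 u i + coeffd ρ i0 u j := by
  obtain ⟨hii, hji⟩ := hρ i
  simp only [coeffd_eq_three_mul_coeffc_sub_sum, coeffc_mul]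
  rw [LinearMap.sum_apply_eq_of_apply_single _ i hii hji,
    LinearMap.apply_eq_add_smul_single_of_apply_single _ i hii hji]
  simp only [Pi.add_apply, Pi.smul_apply, smul_eq_mul, Pi.single_eq_same,
    Pi.single_eq_of_ne hij.symm]
  constructor <;> ring

theorem coeffd_recursion (l : ℕ) (hl : 2 ≤ l) (M : CoxeterMatrix (Fin l))
    (hM : ∀ i j : Fin l, M.M i j = if i = j then 1 else 3)
    (W : Type*) [Group W] (cs : CoxeterSystem M W)
    (ρ : W →* Module.End ℝ (Fin l → ℝ))
    (hρ : ∀ i : Fin l,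
      (ρ (cs.simple i)) (Pi.single i (1 : ℝ)) = -Pi.single i 1 ∧
      ∀ j : Fin l, j ≠ i →
        (ρ (cs.simple i)) (Pi.single j (1 : ℝ)) = Pi.single i 1 + Pi.single j 1)
    (i0 : Fin l) (hi0 : (i0 : ℕ) = 0)
    (u : W) (hu : u ∈ Subgroup.closure {w : W | ∃ i : Fin l, i ≠ i0 ∧ w = cs.simple i})
    (i j : Fin l) (hi : i ≠ i0) (hj : j ≠ i0) (hij : i ≠ j) :
    coeffd ρ i0 (cs.simple i * u) i = -coeffd ρ i0 u i ∧
      coeffd ρ i0 (cs.simple i * u) j = coeffd ρ i0 u i + coeffd ρ i0 u j :=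
  coeffd_recursion_general l M W cs ρ hρ i0 u i j hij
end

section
/- With the notation of the 3-complete setup, let w ∈ W' and i ∈ {2, …, l}. Then d_i(w) ≠ 0, and d_i(w) > 0 if and only if ℓ(s_i w) < ℓ(w) (i.e., if and only if s_i is a left descent of w). -/
theorem LinearMap.BilinForm.IsSymm.apply_sub_smul_sub_smul {R V : Type*} [CommRing R]
    [AddCommGroup V] [Module R V] {b : LinearMap.BilinForm R V} (hb : b.IsSymm) {a : V}
    (ha : b a a = 2) (x y : V) : b (x - b a x • a) (y - b a y • a) = b x y := by
  simp only [map_sub, map_smul, LinearMap.sub_apply, LinearMap.smul_apply, smul_eq_mul, ha,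
    hb.eq x a]
  ring

theorem CoxeterSystem.simple_mul_simple_mul_simple_of_eq_three {B W : Type*} [Group W]
    {M : CoxeterMatrix B} (cs : CoxeterSystem M W) {i j : B} (hij : M i j = 3) :
    cs.simple i * cs.simple j * cs.simple i = cs.simple j * cs.simple i * cs.simple j := by
  have h := cs.wordProd_braidWord_eq j i
  simp only [CoxeterSystem.braidWord, M.symmetric j i, hij] at h
  simpa [CoxeterSystem.alternatingWord, CoxeterSystem.wordProd, mul_assoc] using h

theorem CoxeterSystem.length_mul_simple_mul_simple_mul_simple_le {B W : Type*} [Group W]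
    {M : CoxeterMatrix B} (cs : CoxeterSystem M W) {i j : B} (hij : M i j = 3) (v : W) :
    cs.length (v * cs.simple i * cs.simple j * cs.simple i) ≤ cs.length (v * cs.simple j) + 2 :=
  calc cs.length (v * cs.simple i * cs.simple j * cs.simple i)
      = cs.length (v * cs.simple j * (cs.simple i * cs.simple j)) := by
        simp only [mul_assoc]
        rw [← mul_assoc (cs.simple i), ← mul_assoc (cs.simple j),
          cs.simple_mul_simple_mul_simple_of_eq_three hij]
    _ ≤ cs.length (v * cs.simple j) + (cs.length (cs.simple i) + cs.length (cs.simple j)) :=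
        (cs.length_mul_le _ _).trans (Nat.add_le_add_left (cs.length_mul_le _ _) _)
    _ = cs.length (v * cs.simple j) + 2 := by rw [cs.length_simple, cs.length_simple]

section CoxeterForm

variable {B : Type*} [Fintype B]

/-- Twice the Tits form of the Coxeter matrix with all off-diagonal entries `3`:
`⟪α_i, α_j⟫ = -2 cos (π / m_ij)`. -/
noncomputable def coxeterForm : LinearMap.BilinForm ℝ (B → ℝ) :=
  LinearMap.mk₂ ℝ (fun x y => 3 * (x ⬝ᵥ y) - (∑ k, x k) * ∑ k, y k)
    (fun _ _ _ => by simp only [add_dotProduct, Pi.add_apply, Finset.sum_add_distrib]; ring)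
    (fun _ _ _ => by
      simp only [smul_dotProduct, Pi.smul_apply, smul_eq_mul, ← Finset.mul_sum]; ring)
    (fun _ _ _ => by simp only [dotProduct_add, Pi.add_apply, Finset.sum_add_distrib]; ring)
    (fun _ _ _ => by
      simp only [dotProduct_smul, Pi.smul_apply, smul_eq_mul, ← Finset.mul_sum]; ring)

theorem coxeterForm_apply (x y : B → ℝ) :
    coxeterForm x y = 3 * (x ⬝ᵥ y) - (∑ k, x k) * ∑ k, y k := rfl

theorem coxeterForm_isSymm : (coxeterForm : LinearMap.BilinForm ℝ (B → ℝ)).IsSymm :=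
  ⟨fun x y => by rw [coxeterForm_apply, coxeterForm_apply, dotProduct_comm, mul_comm (∑ k, x k)]⟩

variable [DecidableEq B]

theorem coxeterForm_single_left (i : B) (y : B → ℝ) :
    coxeterForm (Pi.single i 1) y = 3 * y i - ∑ k, y k := by
  simp [coxeterForm_apply]

theorem coxeterForm_single_single (i : B) :
    coxeterForm (Pi.single i 1) (Pi.single i 1 : B → ℝ) = 2 := by
  norm_num [coxeterForm_single_left]

end CoxeterForm

section GeometricRep

variable {B : Type*} [DecidableEq B] {W : Type*} [Group W] {M : CoxeterMatrix B}
  (cs : CoxeterSystem M W) (ρ : Representation ℝ W (B → ℝ))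

/-- The geometric representation, for Coxeter matrices with all off-diagonal entries `3`. -/
def IsGeometricRep : Prop :=
  ∀ i : B, (ρ (cs.simple i)) (Pi.single i (1 : ℝ)) = -Pi.single i 1 ∧
    ∀ j : B, j ≠ i →
      (ρ (cs.simple i)) (Pi.single j (1 : ℝ)) = Pi.single i 1 + Pi.single j 1

namespace IsGeometricRep

variable {cs ρ}

theorem apply_single_nonneg (hρ : IsGeometricRep cs ρ) (hM : ∀ i j, i ≠ j → M i j = 3)
    {w : W} {i : B} (hwi : cs.length w < cs.length (w * cs.simple i)) :
    0 ≤ ρ w (Pi.single i 1) := by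
  induction hn : cs.length w using Nat.strong_induction_on generalizing w i with
  | _ n ih =>
  subst hn
  rcases eq_or_ne w 1 with rfl | hw
  · simp [Pi.single_nonneg]
  obtain ⟨j, hj⟩ := cs.exists_rightDescent_of_ne_one hw
  have hji : j ≠ i := by rintro rfl; exact lt_asymm hj hwi
  obtain ⟨u, rfl⟩ : ∃ u, w = u * cs.simple j := ⟨w * cs.simple j, by simp⟩
  have hu : cs.length (u * cs.simple j) = cs.length u + 1 := by
    have := cs.length_mul_simple u j
    simp only [CoxeterSystem.IsRightDescent, cs.simple_mul_simple_cancel_right] at hj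
    omega
  have huj : 0 ≤ ρ u (Pi.single j 1) := ih _ (by omega) (by omega) rfl
  rw [map_mul, Module.End.mul_apply, (hρ j).2 i hji.symm, map_add]
  rcases cs.length_mul_simple u i with hui | hui
  · exact add_nonneg huj (ih _ (by omega) (by omega) rfl)
  obtain ⟨v, rfl⟩ : ∃ v, u = v * cs.simple i := ⟨u * cs.simple i, by simp⟩
  simp only [cs.simple_mul_simple_cancel_right] at hui
  rw [map_mul, Module.End.mul_apply, Module.End.mul_apply, (hρ i).2 j hji, (hρ i).1,
    ← map_add, add_neg_cancel_comm]
  refine ih _ (by omega) ?_ rfl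
  -- Otherwise `v s_i s_j s_i = (v s_j) s_i s_j` would be shorter than `v s_i s_j`.
  by_contra! hvj
  have := cs.length_mul_simple v j
  have := cs.length_mul_simple_mul_simple_mul_simple_le (hM i j hji.symm) v
  omega

variable [Fintype B]

theorem apply_simple (hρ : IsGeometricRep cs ρ) (i : B) (x : B → ℝ) :
    ρ (cs.simple i) x = x - coxeterForm (Pi.single i 1) x • Pi.single i 1 := by
  suffices ρ (cs.simple i) =
      LinearMap.id - (coxeterForm (Pi.single i 1)).smulRight (Pi.single i 1) by
    simp [this]
  refine (Pi.basisFun ℝ B).ext fun j => ?_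
  rcases eq_or_ne j i with rfl | hji
  · simp [(hρ j).1, coxeterForm_single_single]
    module
  · simp [(hρ i).2 j hji, coxeterForm_single_left, Pi.single_apply, hji]
    module

theorem coxeterForm_apply_apply (hρ : IsGeometricRep cs ρ) (w : W) (x y : B → ℝ) :
    coxeterForm (ρ w x) (ρ w y) = coxeterForm x y := by
  induction w using cs.simple_induction_left generalizing x y with
  | one => simp
  | mul_simple_left w i ih =>
    rw [map_mul, Module.End.mul_apply, Module.End.mul_apply, hρ.apply_simple, hρ.apply_simple,
      coxeterForm_isSymm.apply_sub_smul_sub_smul (coxeterForm_single_single i), ih]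

theorem apply_simple_apply_of_ne (hρ : IsGeometricRep cs ρ) {i k : B} (hk : k ≠ i)
    (x : B → ℝ) : ρ (cs.simple i) x k = x k := by
  simp [hρ.apply_simple, hk]

theorem apply_apply_of_mem_closure (hρ : IsGeometricRep cs ρ) {k : B} {w : W}
    (hw : w ∈ Subgroup.closure {x : W | ∃ i, i ≠ k ∧ x = cs.simple i}) (x : B → ℝ) :
    ρ w x k = x k := by
  induction hw using Subgroup.closure_induction'' generalizing x with
  | mem _ h =>
    obtain ⟨i, hi, rfl⟩ := h
    exact hρ.apply_simple_apply_of_ne hi.symm x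
  | inv_mem _ h =>
    obtain ⟨i, hi, rfl⟩ := h
    rw [cs.inv_simple]
    exact hρ.apply_simple_apply_of_ne hi.symm x
  | one => simp
  | mul g h _ _ ihg ihh => rw [map_mul, Module.End.mul_apply, ihg, ihh]

theorem sum_apply_single_pos (hρ : IsGeometricRep cs ρ) (hM : ∀ i j, i ≠ j → M i j = 3)
    {w : W} {i : B} (hwi : cs.length w < cs.length (w * cs.simple i)) :
    0 < ∑ k, ρ w (Pi.single i 1) k := by
  have hne : ρ w (Pi.single i 1) ≠ 0 :=
    (map_ne_zero_iff _ (ρ.apply_bijective w).injective).2 (by simp)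
  exact Fintype.sum_pos ((hρ.apply_single_nonneg hM hwi).lt_of_ne' hne)

theorem sum_apply_single_neg (hρ : IsGeometricRep cs ρ) (hM : ∀ i j, i ≠ j → M i j = 3)
    {w : W} {i : B} (hwi : cs.length (w * cs.simple i) < cs.length w) :
    ∑ k, ρ w (Pi.single i 1) k < 0 := by
  have hpos := hρ.sum_apply_single_pos hM (w := w * cs.simple i) (i := i) (by simpa using hwi)
  have hneg : ρ w (Pi.single i 1) = -ρ (w * cs.simple i) (Pi.single i 1) := by
    conv_lhs => rw [← cs.simple_mul_simple_cancel_right (w := w) i]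
    rw [map_mul, Module.End.mul_apply, (hρ i).1, map_neg]
  simpa [hneg] using hpos

theorem sum_apply_single_ne_zero (hρ : IsGeometricRep cs ρ) (hM : ∀ i j, i ≠ j → M i j = 3)
    (w : W) (i : B) : ∑ k, ρ w (Pi.single i 1) k ≠ 0 := by
  rcases cs.length_mul_simple w i with h | h
  · exact (hρ.sum_apply_single_pos hM (by omega)).ne'
  · exact (hρ.sum_apply_single_neg hM (by omega)).ne

theorem sum_apply_single_neg_iff (hρ : IsGeometricRep cs ρ) (hM : ∀ i j, i ≠ j → M i j = 3)
    (w : W) (i : B) :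
    ∑ k, ρ w (Pi.single i 1) k < 0 ↔ cs.length (w * cs.simple i) < cs.length w := by
  rcases cs.length_mul_simple w i with h | h
  · exact iff_of_false (hρ.sum_apply_single_pos hM (by omega)).not_gt (by omega)
  · exact iff_of_true (hρ.sum_apply_single_neg hM (by omega)) (by omega)

end IsGeometricRep

end GeometricRep

theorem coeffd_eq_coxeterForm {l : ℕ} {W : Type*} [Group W]
    (ρ : W →* Module.End ℝ (Fin l → ℝ)) (i0 : Fin l) (w : W) (i : Fin l) :
    coeffd ρ i0 w i = coxeterForm (Pi.single i 1) (ρ w (Pi.single i0 1)) := by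
  rw [coxeterForm_single_left, coeffd, Finset.sum_erase_eq_sub (Finset.mem_univ i)]
  simp only [coeffc]
  ring

theorem coeffd_eq_neg_sum {l : ℕ} {W : Type*} [Group W] {M : CoxeterMatrix (Fin l)}
    {cs : CoxeterSystem M W} {ρ : W →* Module.End ℝ (Fin l → ℝ)} (hρ : IsGeometricRep cs ρ)
    {i0 i : Fin l} (hi : i ≠ i0) {w : W}
    (hw : w ∈ Subgroup.closure {x : W | ∃ i : Fin l, i ≠ i0 ∧ x = cs.simple i}) :
    coeffd ρ i0 w i = -∑ k, ρ w⁻¹ (Pi.single i 1) k := by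
  rw [coeffd_eq_coxeterForm, ← hρ.coxeterForm_apply_apply w⁻¹, Representation.inv_self_apply,
    coxeterForm_isSymm.eq, coxeterForm_single_left, hρ.apply_apply_of_mem_closure (inv_mem hw),
    Pi.single_eq_of_ne hi.symm]
  ring

theorem coeffd_ne_zero_and_pos_iff_leftDescent_general (l : ℕ)
    (M : CoxeterMatrix (Fin l))
    (hM : ∀ i j : Fin l, M.M i j = if i = j then 1 else 3)
    (W : Type*) [Group W] (cs : CoxeterSystem M W)
    (ρ : W →* Module.End ℝ (Fin l → ℝ))
    (hρ : ∀ i : Fin l,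
      (ρ (cs.simple i)) (Pi.single i (1 : ℝ)) = -Pi.single i 1 ∧
      ∀ j : Fin l, j ≠ i →
        (ρ (cs.simple i)) (Pi.single j (1 : ℝ)) = Pi.single i 1 + Pi.single j 1)
    (i0 : Fin l)
    (w : W) (hw : w ∈ Subgroup.closure {x : W | ∃ i : Fin l, i ≠ i0 ∧ x = cs.simple i})
    (i : Fin l) (hi : i ≠ i0) :
    coeffd ρ i0 w i ≠ 0 ∧
      (0 < coeffd ρ i0 w i ↔ cs.length (cs.simple i * w) < cs.length w) := by
  have hρ' : IsGeometricRep cs ρ := hρ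
  have hM' : ∀ i j, i ≠ j → M i j = 3 := fun i j hij => by rw [hM, if_neg hij]
  have hlen : cs.length (cs.simple i * w) = cs.length (w⁻¹ * cs.simple i) := by
    rw [← cs.length_inv, mul_inv_rev, cs.inv_simple]
  rw [coeffd_eq_neg_sum hρ' hi hw, neg_ne_zero, neg_pos, hlen, ← cs.length_inv w]
  exact ⟨hρ'.sum_apply_single_ne_zero hM' w⁻¹ i, hρ'.sum_apply_single_neg_iff hM' w⁻¹ i⟩

theorem coeffd_ne_zero_and_pos_iff_leftDescent (l : ℕ) (hl : 2 ≤ l)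
    (M : CoxeterMatrix (Fin l))
    (hM : ∀ i j : Fin l, M.M i j = if i = j then 1 else 3)
    (W : Type*) [Group W] (cs : CoxeterSystem M W)
    (ρ : W →* Module.End ℝ (Fin l → ℝ))
    (hρ : ∀ i : Fin l,
      (ρ (cs.simple i)) (Pi.single i (1 : ℝ)) = -Pi.single i 1 ∧
      ∀ j : Fin l, j ≠ i →
        (ρ (cs.simple i)) (Pi.single j (1 : ℝ)) = Pi.single i 1 + Pi.single j 1)
    (i0 : Fin l) (hi0 : (i0 : ℕ) = 0)
    (w : W) (hw : w ∈ Subgroup.closure {x : W | ∃ i : Fin l, i ≠ i0 ∧ x = cs.simple i})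
    (i : Fin l) (hi : i ≠ i0) :
    coeffd ρ i0 w i ≠ 0 ∧
      (0 < coeffd ρ i0 w i ↔ cs.length (cs.simple i * w) < cs.length w) :=
  coeffd_ne_zero_and_pos_iff_leftDescent_general l M hM W cs ρ hρ i0 w hw i hi
end
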